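/- arXiv:1402.1292 — 8 statements merged into one kernel-verified Lean document; each statement's English description precedes it below -/
import Mathlib

section
/- Let L be a field of characteristic different from 2. For n ≥ 1 let N_n ∈ M_n(L) be the matrix with (N_n)_{i,j} = 1 if i = j−1 and (N_n)_{i,j} = 0 otherwise. Let l ≥ 0 and let m_1, …, m_l ≥ 0 be integers, and let N = diag(N_1, …, N_1, …, N_l, …, N_l) be the block-diagonal matrix in which each block N_n is repeated m_n times. Then there exists an invertible skew-symmetric matrix A (i.e. Aᵀ = −A) over L with A·N = −Nᵀ·A if and only if m_n is even for every odd n with 1 ≤ n ≤ l. -/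
open Matrix

/-- The `k × k` Jordan nilpotent block `N_k` over `L`, with entries
`(N_k)_{i,j} = 1` if `i = j - 1` (i.e. `i + 1 = j`) and `0` otherwise. -/
def jordanNilBlock (L : Type*) [Zero L] [One L] (k : ℕ) : Matrix (Fin k) (Fin k) L :=
  fun i j => if (i : ℕ) + 1 = (j : ℕ) then 1 else 0

/-- The block-diagonal matrix `N = N(m_1, …, m_l)` in which, for each `1 ≤ n ≤ l`,
the Jordan block `N_n` is repeated `m_n` times (the index `p : Fin l` corresponds
to the block size `p + 1`). -/
def jordanNilMatrix (L : Type*) [Zero L] [One L] (l : ℕ) (m : Fin l → ℕ) :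
    Matrix (Σ p : Σ n : Fin l, Fin (m n), Fin ((p.1 : ℕ) + 1))
           (Σ p : Σ n : Fin l, Fin (m n), Fin ((p.1 : ℕ) + 1)) L :=
  Matrix.blockDiagonal' fun p : Σ n : Fin l, Fin (m n) =>
    jordanNilBlock L ((p.1 : ℕ) + 1)

open scoped Kronecker

/-!
If `A` is an invertible skew-symmetric matrix with `A N = -Nᵀ A`, then `A N^k` is skew-symmetric
for every even `k`, so `rank N^k` is even (in characteristic `≠ 2` a skew-symmetric matrix has
even rank). Since `rank N^k = ∑ₙ mₙ (n - k)⁺`, the sum `rank N^(n-1) + rank N^(n+1)` is congruent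
to `mₙ` modulo 2, which forces `mₙ` to be even whenever `n` is odd.

Conversely, after regrouping the blocks, `N ≅ ⊕ₙ 1_{mₙ} ⊗ Nₙ`, and
`A = ⊕ₙ σₙ ⊗ Jₙ` works, where `Jₙ` is the antidiagonal matrix with alternating signs
(`Jₙᵀ = (-1)^(n-1) Jₙ`, `Jₙ Nₙ = -Nₙᵀ Jₙ`) and `σₙ` is the identity for even `n` and a
standard symplectic matrix on the even number `mₙ` of copies for odd `n`. In the code the
blocks of size `n + 1` are indexed by `n : Fin l`, which shifts these exponents by one.
-/

namespace Matrix

section SkewRank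

variable {ι K : Type*} [Fintype ι] [Field K]

theorem det_eq_zero_of_transpose_eq_neg [DecidableEq ι] (hK : ringChar K ≠ 2) {S : Matrix ι ι K}
    (hS : Sᵀ = -S) (hι : Odd (Fintype.card ι)) : S.det = 0 := by
  have h : S.det = -S.det := by
    conv_lhs => rw [← det_transpose, hS, det_neg, hι.neg_one_pow, neg_one_mul]
  rw [eq_neg_iff_add_eq_zero, ← two_mul] at h
  exact (mul_eq_zero.1 h).resolve_left (Ring.two_ne_zero hK)

/- The Gram matrix `G = Bᵀ S B` of the form `S` on a complement `W` of `ker S` is nonsingular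
and skew-symmetric, so its size `dim W = rank S` is even. -/
theorem even_rank_of_transpose_eq_neg (hK : ringChar K ≠ 2) {S : Matrix ι ι K}
    (hS : Sᵀ = -S) : Even S.rank := by
  obtain ⟨W, hW⟩ := (LinearMap.ker S.mulVecLin).exists_isCompl
  let b := Module.finBasis K W
  let φ : (Fin (Module.finrank K W) → K) →ₗ[K] ι → K := W.subtype ∘ₗ b.equivFun.symm.toLinearMap
  let B := LinearMap.toMatrix' φ
  have hrank : S.rank = Module.finrank K W := by
    have h1 := LinearMap.finrank_range_add_finrank_ker S.mulVecLin
    have h2 := Submodule.finrank_add_eq_of_isCompl hW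
    rw [rank]
    omega
  have hG : (Bᵀ * S * B).det ≠ 0 := by
    rw [Ne, ← exists_mulVec_eq_zero_iff]
    rintro ⟨v, hv, hGv⟩
    have hSv : S *ᵥ φ v = 0 := by
      -- it pairs to zero with `ker S` by skew-symmetry and with `W = range φ` since `G v = 0`
      refine dotProduct_eq_zero _ fun u => ?_
      obtain ⟨x, hx, y, hy, rfl⟩ :=
        Submodule.mem_sup.1 (hW.sup_eq_top ▸ Submodule.mem_top : u ∈ _ ⊔ W)
      obtain ⟨v', rfl⟩ : ∃ v', φ v' = y := ⟨b.equivFun ⟨y, hy⟩, by simp [φ]⟩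
      have hx0 : S *ᵥ x = 0 := hx
      have hGram : φ v' ⬝ᵥ (S *ᵥ φ v) = v' ⬝ᵥ ((Bᵀ * S * B) *ᵥ v) := by
        rw [← mulVec_mulVec, ← mulVec_mulVec, dotProduct_mulVec v', vecMul_transpose,
          LinearMap.toMatrix'_mulVec, LinearMap.toMatrix'_mulVec]
      rw [dotProduct_add, dotProduct_comm, dotProduct_mulVec, ← mulVec_transpose, hS, neg_mulVec,
        hx0, neg_zero, zero_dotProduct, zero_add, dotProduct_comm, hGram, hGv, dotProduct_zero]
    have hφv : φ v = 0 := Submodule.disjoint_def.1 hW.disjoint _ hSv (b.equivFun.symm v).2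
    exact hv (b.equivFun.symm.map_eq_zero_iff.1 (Submodule.coe_eq_zero.1 hφv))
  have hGt : (Bᵀ * S * B)ᵀ = -(Bᵀ * S * B) := by simp [transpose_mul, hS, Matrix.mul_assoc]
  rw [hrank, ← Fintype.card_fin (Module.finrank K W), ← Nat.not_odd_iff_even]
  exact fun hodd => hG (det_eq_zero_of_transpose_eq_neg hK hGt hodd)

theorem rank_transpose_mul_self_of_mul_eq {κ : Type*} [Fintype κ] {M : Matrix κ ι K}
    (h : M * (Mᵀ * M) = M) : (Mᵀ * M).rank = M.rank :=
  le_antisymm (rank_mul_le_right _ _) <| calc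
    M.rank = (M * (Mᵀ * M)).rank := by rw [h]
    _ ≤ (Mᵀ * M).rank := rank_mul_le_right _ _

end SkewRank

section CommRing

variable {ι κ R : Type*} [Fintype ι] [Fintype κ] [DecidableEq ι] [DecidableEq κ] [CommRing R]

def IsSkewAdjointForSymplecticForm (N : Matrix ι ι R) : Prop :=
  ∃ A : Matrix ι ι R, IsUnit A ∧ Aᵀ = -A ∧ A * N = -(Nᵀ * A)

theorem IsSkewAdjointForSymplecticForm.submatrix {N : Matrix ι ι R}
    (h : IsSkewAdjointForSymplecticForm N) (e : κ ≃ ι) :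
    IsSkewAdjointForSymplecticForm (N.submatrix e e) := by
  obtain ⟨A, hA, hAt, hAN⟩ := h
  refine ⟨A.submatrix e e, (isUnit_submatrix_equiv e e).2 hA, ?_, ?_⟩
  · rw [transpose_submatrix, hAt]
    rfl
  · rw [transpose_submatrix, submatrix_mul_equiv _ _ _ e, submatrix_mul_equiv _ _ _ e, hAN]
    rfl

theorem isSkewAdjointForSymplecticForm_submatrix_iff {N : Matrix ι ι R} (e : κ ≃ ι) :
    IsSkewAdjointForSymplecticForm (N.submatrix e e) ↔ IsSkewAdjointForSymplecticForm N :=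
  ⟨fun h => by simpa using h.submatrix e.symm, fun h => h.submatrix e⟩

theorem mul_pow_eq_of_mul_eq_neg {A N : Matrix ι ι R} (hAN : A * N = -(Nᵀ * A)) (k : ℕ) :
    A * N ^ k = (-1 : R) ^ k • (Nᵀ ^ k * A) := by
  induction k with
  | zero => simp
  | succ k ih =>
    rw [pow_succ, ← Matrix.mul_assoc, ih, smul_mul, Matrix.mul_assoc, hAN, Matrix.mul_neg,
      pow_succ Nᵀ, pow_succ (-1 : R), mul_smul, neg_one_smul, Matrix.mul_assoc, smul_neg]

end CommRing

theorem IsSkewAdjointForSymplecticForm.even_rank_pow {ι K : Type*} [Fintype ι] [DecidableEq ι]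
    [Field K] (hK : ringChar K ≠ 2) {N : Matrix ι ι K} (h : IsSkewAdjointForSymplecticForm N)
    {k : ℕ} (hk : Even k) : Even (N ^ k).rank := by
  obtain ⟨A, hA, hAt, hAN⟩ := h
  have hskew : (A * N ^ k)ᵀ = -(A * N ^ k) := by
    rw [transpose_mul, transpose_pow, hAt, Matrix.mul_neg, mul_pow_eq_of_mul_eq_neg hAN,
      hk.neg_one_pow, one_smul]
  rw [← rank_mul_eq_right_of_isUnit_det A _ ((isUnit_iff_isUnit_det A).1 hA)]
  exact even_rank_of_transpose_eq_neg hK hskew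

end Matrix

section JordanBlock

variable {R : Type*} [CommRing R]

lemma jordanNilBlock_pow_apply (s k : ℕ) (i j : Fin s) :
    (jordanNilBlock R s ^ k) i j = if (i : ℕ) + k = j then 1 else 0 := by
  induction k generalizing j with
  | zero => simp [one_apply, Fin.ext_iff]
  | succ k ih =>
    rw [pow_succ, mul_apply]
    simp only [ih, jordanNilBlock, ite_mul, one_mul, zero_mul]
    rw [Fin.sum_univ_eq_sum_range (fun r => if (i : ℕ) + k = r then
      (if r + 1 = (j : ℕ) then (1 : R) else 0) else 0), Finset.sum_ite_eq]
    grind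

lemma jordanNilBlock_pow_transpose_mul_self (s k : ℕ) :
    (jordanNilBlock R s ^ k)ᵀ * jordanNilBlock R s ^ k =
      diagonal fun j : Fin s => if k ≤ (j : ℕ) then 1 else 0 := by
  ext i j
  simp only [mul_apply, transpose_apply, jordanNilBlock_pow_apply, diagonal_apply, ite_mul,
    one_mul, zero_mul]
  rw [Fin.sum_univ_eq_sum_range (fun r => if r + k = (i : ℕ) then
      (if r + k = (j : ℕ) then (1 : R) else 0) else 0)]
  by_cases hk : k ≤ i
  · rw [Finset.sum_eq_single_of_mem (i - k) (Finset.mem_range.2 (by omega))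
      (fun r _ hr => by grind)]
    grind
  · rw [Finset.sum_eq_zero (fun r _ => by grind)]
    grind

lemma jordanNilBlock_pow_mul_transpose_mul_self (s k : ℕ) :
    jordanNilBlock R s ^ k * ((jordanNilBlock R s ^ k)ᵀ * jordanNilBlock R s ^ k) =
      jordanNilBlock R s ^ k := by
  ext i j
  rw [jordanNilBlock_pow_transpose_mul_self, mul_diagonal, jordanNilBlock_pow_apply]
  grind

def antidiagSign (R : Type*) [CommRing R] (n : ℕ) : Matrix (Fin (n + 1)) (Fin (n + 1)) R :=
  of fun i j => if (i : ℕ) + j = n then (-1) ^ (i : ℕ) else 0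

lemma neg_one_pow_eq_of_add_eq {i j n : ℕ} (h : i + j = n) :
    (-1 : R) ^ j = (-1) ^ n * (-1) ^ i := by
  subst h
  rw [pow_add, mul_right_comm, ← mul_pow]
  simp

lemma antidiagSign_transpose (n : ℕ) :
    (antidiagSign R n)ᵀ = (-1 : R) ^ n • antidiagSign R n := by
  ext i j
  simp only [antidiagSign, transpose_apply, of_apply, Matrix.smul_apply, smul_eq_mul, mul_ite,
    mul_zero]
  split_ifs with h h'
  · exact neg_one_pow_eq_of_add_eq h'
  all_goals first | rfl | omega

lemma antidiagSign_mul_self (n : ℕ) :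
    antidiagSign R n * antidiagSign R n = (-1 : R) ^ n • 1 := by
  ext i k
  rw [mul_apply, Finset.sum_eq_single ⟨n - i, by omega⟩ (fun r _ hr => ?_) (by simp)]
  · simp only [antidiagSign, of_apply, Matrix.smul_apply, Matrix.one_apply, Fin.ext_iff,
      smul_eq_mul]
    split_ifs with h₁ <;> first | omega | simp
    simp only [← pow_add, h₁]
  · simp only [antidiagSign, of_apply, Ne, Fin.ext_iff] at hr ⊢
    split_ifs <;> first | omega | simp

lemma antidiagSign_mul_jordanNilBlock (n : ℕ) :
    antidiagSign R n * jordanNilBlock R (n + 1) =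
      -((jordanNilBlock R (n + 1))ᵀ * antidiagSign R n) := by
  ext i k
  rw [Matrix.neg_apply, mul_apply, mul_apply,
    Finset.sum_eq_single ⟨n - i, by omega⟩ (fun r _ hr => ?_) (by simp),
    Finset.sum_eq_single ⟨i - 1, by omega⟩ (fun r _ hr => ?_) (by simp)]
  · simp only [antidiagSign, jordanNilBlock, transpose_apply, of_apply]
    split_ifs with h₁ h₂ h₃ <;> first | omega | simp
    conv_lhs => rw [← h₃]
    rw [pow_succ, mul_neg_one]
  all_goals
    simp only [antidiagSign, jordanNilBlock, transpose_apply, of_apply, Ne, Fin.ext_iff] at hr ⊢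
    split_ifs <;> first | omega | simp

end JordanBlock

section KroneckerForm

variable (R : Type*) [CommRing R] (l : ℕ) (m : Fin l → ℕ)

def jordanIndexEquiv :
    (Σ p : Σ n : Fin l, Fin (m n), Fin ((p.1 : ℕ) + 1)) ≃ Σ n : Fin l, Fin (m n) × Fin (n + 1) :=
  (Equiv.sigmaAssoc fun n (_ : Fin (m n)) => Fin ((n : ℕ) + 1)).trans
    (Equiv.sigmaCongrRight fun _ => Equiv.sigmaEquivProd _ _)

def jordanKroneckerMatrix :
    Matrix (Σ n : Fin l, Fin (m n) × Fin (n + 1)) (Σ n : Fin l, Fin (m n) × Fin (n + 1)) R :=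
  blockDiagonal' fun n => (1 : Matrix (Fin (m n)) (Fin (m n)) R) ⊗ₖ jordanNilBlock R (n + 1)

lemma jordanNilMatrix_eq_submatrix :
    jordanNilMatrix R l m =
      (jordanKroneckerMatrix R l m).submatrix (jordanIndexEquiv l m) (jordanIndexEquiv l m) := by
  ext ⟨⟨n, c⟩, i⟩ ⟨⟨n', c'⟩, j⟩
  simp only [jordanNilMatrix, jordanKroneckerMatrix, jordanIndexEquiv, submatrix_apply,
    Equiv.trans_apply, Equiv.sigmaAssoc, Equiv.sigmaCongrRight_apply,
    Equiv.sigmaEquivProd_apply, blockDiagonal'_apply]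
  by_cases hn : n = n'
  · subst hn
    by_cases hc : c = c' <;> simp [hc]
  · simp [hn]

lemma jordanKroneckerMatrix_pow (k : ℕ) :
    jordanKroneckerMatrix R l m ^ k =
      blockDiagonal' fun n =>
        (1 : Matrix (Fin (m n)) (Fin (m n)) R) ⊗ₖ (jordanNilBlock R (n + 1) ^ k) := by
  rw [jordanKroneckerMatrix, ← blockDiagonal'_pow]
  congr 1
  funext n
  rw [Pi.pow_apply]
  induction k with
  | zero => simp
  | succ k ih => rw [pow_succ, ih, ← mul_kronecker_mul, Matrix.one_mul, pow_succ]

end KroneckerForm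

lemma Fin.sum_boole_le_val (s k : ℕ) : (∑ j : Fin s, if k ≤ (j : ℕ) then 1 else 0) = s - k := by
  rw [Fin.sum_univ_eq_sum_range (fun j => if k ≤ j then 1 else 0), Finset.sum_boole,
    Finset.range_eq_Ico, Finset.Ico_filter_le, Nat.card_Ico, Nat.zero_max, Nat.cast_id]

section Rank

variable {K : Type*} [Field K] {l : ℕ} {m : Fin l → ℕ}

lemma jordanKroneckerMatrix_pow_transpose_mul_self (k : ℕ) :
    (jordanKroneckerMatrix K l m ^ k)ᵀ * jordanKroneckerMatrix K l m ^ k =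
      diagonal fun x => if k ≤ (x.2.2 : ℕ) then 1 else 0 := by
  rw [jordanKroneckerMatrix_pow, blockDiagonal'_transpose, ← blockDiagonal'_mul,
    ← blockDiagonal'_diagonal fun n (x : Fin (m n) × Fin (n + 1)) =>
      if k ≤ (x.2 : ℕ) then (1 : K) else 0]
  congr 1
  funext n
  rw [← kroneckerMap_transpose, transpose_one, ← mul_kronecker_mul, Matrix.one_mul,
    jordanNilBlock_pow_transpose_mul_self, ← diagonal_one,
    kroneckerMap_diagonal_diagonal _ zero_mul mul_zero]
  simp only [one_mul]

lemma jordanKroneckerMatrix_pow_mul_transpose_mul_self (k : ℕ) :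
    jordanKroneckerMatrix K l m ^ k *
        ((jordanKroneckerMatrix K l m ^ k)ᵀ * jordanKroneckerMatrix K l m ^ k) =
      jordanKroneckerMatrix K l m ^ k := by
  rw [jordanKroneckerMatrix_pow, blockDiagonal'_transpose, ← blockDiagonal'_mul,
    ← blockDiagonal'_mul]
  congr 1
  funext n
  rw [← kroneckerMap_transpose, transpose_one, ← mul_kronecker_mul, ← mul_kronecker_mul,
    Matrix.one_mul, Matrix.one_mul, jordanNilBlock_pow_mul_transpose_mul_self]

lemma rank_jordanKroneckerMatrix_pow (k : ℕ) :
    (jordanKroneckerMatrix K l m ^ k).rank = ∑ n, m n * (n + 1 - k) := by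
  classical
  rw [← rank_transpose_mul_self_of_mul_eq (jordanKroneckerMatrix_pow_mul_transpose_mul_self k),
    jordanKroneckerMatrix_pow_transpose_mul_self, rank_diagonal]
  simp only [ne_eq, ite_eq_right_iff, one_ne_zero, imp_false, not_not, Fintype.card_subtype,
    Finset.card_filter, Fintype.sum_sigma, Fintype.sum_prod_type, Fin.sum_boole_le_val,
    Finset.sum_const, Finset.card_univ, Fintype.card_fin, smul_eq_mul]

end Rank

lemma even_of_forall_even_sum_mul_tsub {l : ℕ} (m : Fin l → ℕ)
    (h : ∀ k, Even k → Even (∑ n, m n * (n + 1 - k))) (n : Fin l) (hn : Odd ((n : ℕ) + 1)) :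
    Even (m n) := by
  have hsplit : ∀ i : Fin l, ((i : ℕ) + 1 - n) + ((i : ℕ) + 1 - (n + 2)) =
      (if i = n then 1 else 0) + 2 * ((i : ℕ) - n) := by
    intro i
    split_ifs with hi
    · subst hi; omega
    · have : (i : ℕ) ≠ n := fun h => hi (Fin.ext h)
      omega
  have hn' : Even (n : ℕ) := Nat.not_odd_iff_even.1 (Nat.odd_add_one.1 hn)
  have := (h n hn').add (h (n + 2) (hn'.add even_two))
  rw [← Finset.sum_add_distrib] at this
  simp_rw [← mul_add, hsplit, mul_add, Finset.sum_add_distrib, mul_ite, mul_one, mul_zero,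
    Finset.sum_ite_eq', Finset.mem_univ, if_true, mul_left_comm _ 2, ← Finset.mul_sum] at this
  exact (Nat.even_add.1 this).2 (even_two_mul _)

section Construction

variable {R : Type*} [CommRing R]

lemma exists_transpose_eq_neg_mul_self_eq_neg_one {k : ℕ} (hk : Even k) :
    ∃ σ : Matrix (Fin k) (Fin k) R, σᵀ = -σ ∧ σ * σ = -1 := by
  obtain ⟨t, rfl⟩ := hk
  let e : Fin (t + t) ≃ Fin t ⊕ Fin t := finSumFinEquiv.symm
  refine ⟨(J (Fin t) R).submatrix e e, ?_, ?_⟩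
  · rw [transpose_submatrix, J_transpose]
    rfl
  · rw [submatrix_mul_equiv _ _ _ e, J_squared, ← submatrix_one_equiv e]
    rfl

lemma exists_transpose_eq_smul_mul_self_eq_smul (n : ℕ) {k : ℕ} (h : Odd (n + 1) → Even k) :
    ∃ σ : Matrix (Fin k) (Fin k) R,
      σᵀ = (-1 : R) ^ (n + 1) • σ ∧ σ * σ = (-1 : R) ^ (n + 1) • 1 := by
  rcases Nat.even_or_odd (n + 1) with hn | hn
  · exact ⟨1, by simp [hn.neg_one_pow]⟩
  · obtain ⟨σ, hσt, hσσ⟩ := exists_transpose_eq_neg_mul_self_eq_neg_one (R := R) (h hn)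
    exact ⟨σ, by simp [hn.neg_one_pow, hσt, hσσ]⟩

lemma neg_one_pow_succ_mul_neg_one_pow (n : ℕ) : (-1 : R) ^ (n + 1) * (-1) ^ n = -1 := by
  rw [← pow_add, Odd.neg_one_pow ⟨n, by ring⟩]

variable {n k : ℕ} {σ : Matrix (Fin k) (Fin k) R}

lemma kronecker_antidiagSign_transpose (hσ : σᵀ = (-1 : R) ^ (n + 1) • σ) :
    (σ ⊗ₖ antidiagSign R n)ᵀ = -(σ ⊗ₖ antidiagSign R n) := by
  rw [← kroneckerMap_transpose, hσ, antidiagSign_transpose, smul_kronecker, kronecker_smul,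
    smul_smul, neg_one_pow_succ_mul_neg_one_pow, neg_one_smul]

lemma kronecker_antidiagSign_mul_self (hσ : σ * σ = (-1 : R) ^ (n + 1) • 1) :
    (σ ⊗ₖ antidiagSign R n) * (σ ⊗ₖ antidiagSign R n) = -1 := by
  rw [← mul_kronecker_mul, hσ, antidiagSign_mul_self, smul_kronecker, kronecker_smul,
    smul_smul, neg_one_pow_succ_mul_neg_one_pow, neg_one_smul, one_kronecker_one]

lemma kronecker_antidiagSign_mul_one_kronecker_jordanNilBlock :
    (σ ⊗ₖ antidiagSign R n) * ((1 : Matrix (Fin k) (Fin k) R) ⊗ₖ jordanNilBlock R (n + 1)) =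
      -((1 ⊗ₖ jordanNilBlock R (n + 1))ᵀ * (σ ⊗ₖ antidiagSign R n)) := by
  rw [← mul_kronecker_mul, ← kroneckerMap_transpose, ← mul_kronecker_mul, transpose_one,
    Matrix.mul_one, Matrix.one_mul, antidiagSign_mul_jordanNilBlock]
  exact ext fun _ _ => mul_neg _ _

theorem isSkewAdjointForSymplecticForm_jordanKroneckerMatrix {l : ℕ} {m : Fin l → ℕ}
    (h : ∀ n : Fin l, Odd ((n : ℕ) + 1) → Even (m n)) :
    IsSkewAdjointForSymplecticForm (jordanKroneckerMatrix R l m) := by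
  choose σ hσt hσσ using fun n : Fin l => exists_transpose_eq_smul_mul_self_eq_smul (R := R) n (h n)
  let A := blockDiagonal' fun n => σ n ⊗ₖ antidiagSign R n
  have hAA : A * A = -1 := by
    rw [← blockDiagonal'_mul]
    simp only [kronecker_antidiagSign_mul_self (hσσ _)]
    rw [← blockDiagonal'_one, ← blockDiagonal'_neg]
    rfl
  refine ⟨A, (isUnit_iff_isUnit_det _).2 (isUnit_det_of_right_inverse (B := -A) ?_), ?_, ?_⟩
  · rw [Matrix.mul_neg, hAA, neg_neg]
  · rw [blockDiagonal'_transpose]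
    simp only [kronecker_antidiagSign_transpose (hσt _)]
    exact blockDiagonal'_neg _
  · rw [jordanKroneckerMatrix, blockDiagonal'_transpose, ← blockDiagonal'_mul,
      ← blockDiagonal'_mul]
    simp only [kronecker_antidiagSign_mul_one_kronecker_jordanNilBlock]
    exact blockDiagonal'_neg _

end Construction

/-- Let `L` be a field of characteristic `≠ 2` and let `N = N(m_1, …, m_l)` be the
block-diagonal nilpotent matrix with `m_n` copies of the Jordan block `N_n` for
`1 ≤ n ≤ l`.  Then there exists an invertible skew-symmetric matrix `A` over `L` with
`A * N = -(Nᵀ * A)` if and only if `m_n` is even for every odd `n` with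
`1 ≤ n ≤ l`. -/
theorem exists_invertible_skewSymmetric_anticommuting_iff
    {L : Type*} [Field L] (hchar : ringChar L ≠ 2) (l : ℕ) (m : Fin l → ℕ) :
    (∃ A : Matrix (Σ p : Σ n : Fin l, Fin (m n), Fin ((p.1 : ℕ) + 1))
             (Σ p : Σ n : Fin l, Fin (m n), Fin ((p.1 : ℕ) + 1)) L,
        IsUnit A ∧ Aᵀ = -A ∧
          A * jordanNilMatrix L l m = -((jordanNilMatrix L l m)ᵀ * A)) ↔
      ∀ n : Fin l, Odd ((n : ℕ) + 1) → Even (m n) := by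
  change IsSkewAdjointForSymplecticForm (jordanNilMatrix L l m) ↔ _
  rw [jordanNilMatrix_eq_submatrix, isSkewAdjointForSymplecticForm_submatrix_iff]
  refine ⟨fun h => even_of_forall_even_sum_mul_tsub m fun k hk => ?_,
    isSkewAdjointForSymplecticForm_jordanKroneckerMatrix⟩
  rw [← rank_jordanKroneckerMatrix_pow (K := L)]
  exact h.even_rank_pow hchar hk
end

section
/- Let (C, D, ev) be an additive category with duality and let A be an object of C such that the endomorphism ring End(A) is local (i.e. End(A) is a nonzero ring in which, whenever u + v is invertible, u or v is invertible) and such that 2·id_A is an isomorphism. If A is self-dual (there exists some isomorphism A ≅ D A), then A is 1-self-dual or (−1)-self-dual. -/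
open CategoryTheory Opposite

/-- A category with duality: a functor `D : Cᵒᵖ ⥤ C` together with an evaluation
natural transformation `ev : 𝟭 C ⟶ D.rightOp ⋙ D` such that the composite
`D A → D D D A → D A` (namely `ev_{D A}` followed by `D (ev_A)`) is the identity. -/
structure CatWithDuality (C : Type*) [Category C] where
  D : Cᵒᵖ ⥤ C
  ev : 𝟭 C ⟶ D.rightOp ⋙ D
  ev_comp : ∀ A : C, ev.app (D.obj (op A)) ≫ D.map (ev.app A).op = 𝟙 (D.obj (op A))

/-- The transpose `g^T : A ⟶ D B` of a morphism `g : B ⟶ D A`, namely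
`ev_A` followed by `D g`. -/
def CatWithDuality.transpose {C : Type*} [Category C] (S : CatWithDuality C)
    {A B : C} (g : B ⟶ S.D.obj (op A)) : A ⟶ S.D.obj (op B) :=
  S.ev.app A ≫ S.D.map g.op

lemma CatWithDuality.transpose_transpose {C : Type*} [Category C] (S : CatWithDuality C)
    {A B : C} (g : B ⟶ S.D.obj (op A)) : S.transpose (S.transpose g) = g := by
  have hnat := S.ev.naturality g
  simp only [Functor.id_map, Functor.comp_map, Functor.rightOp_map] at hnat
  simp only [transpose, op_comp, Functor.map_comp, ← Category.assoc, ← hnat]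
  rw [Category.assoc, S.ev_comp A]
  simp

lemma CatWithDuality.transpose_add {C : Type*} [Category C] [Preadditive C]
    (S : CatWithDuality C) (hD : S.D.Additive) {A B : C}
    (g h : B ⟶ S.D.obj (op A)) :
    S.transpose (g + h) = S.transpose g + S.transpose h := by
  haveI := hD
  simp [transpose, op_add, Functor.map_add, Preadditive.comp_add]

lemma CatWithDuality.transpose_sub {C : Type*} [Category C] [Preadditive C]
    (S : CatWithDuality C) (hD : S.D.Additive) {A B : C}
    (g h : B ⟶ S.D.obj (op A)) :
    S.transpose (g - h) = S.transpose g - S.transpose h := by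
  have h1 := S.transpose_add hD (g - h) h
  rw [sub_add_cancel] at h1
  exact eq_sub_of_add_eq h1.symm

/-- Let `(C, D, ev)` be an additive category with duality and `A` an object whose
endomorphism ring is local (nonzero, and whenever `u + v` is invertible then `u` or
`v` is invertible) and in which `2 • 𝟙 A` is an isomorphism. If `A` is self-dual,
then `A` is `1`-self-dual or `(-1)`-self-dual. -/
theorem CatWithDuality.self_dual_trichotomy {C : Type*} [Category C] [Preadditive C]
    (S : CatWithDuality C) (hD : S.D.Additive) (A : C)
    (hnz : Nontrivial (A ⟶ A))
    (hloc : ∀ u v : A ⟶ A, IsIso (u + v) → IsIso u ∨ IsIso v)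
    (h2 : IsIso ((2 : ℤ) • 𝟙 A))
    (hsd : ∃ f : A ⟶ S.D.obj (op A), IsIso f) :
    (∃ f : A ⟶ S.D.obj (op A), IsIso f ∧ f = S.transpose f) ∨
    (∃ f : A ⟶ S.D.obj (op A), IsIso f ∧ f = -S.transpose f) := by
  obtain ⟨f, hf⟩ := hsd
  set p : A ⟶ S.D.obj (op A) := f + S.transpose f with hp
  set q : A ⟶ S.D.obj (op A) := f - S.transpose f with hq
  have hsum : (p ≫ inv f) + (q ≫ inv f) = (2 : ℤ) • 𝟙 A := by
    rw [← Preadditive.add_comp, hp, hq]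
    have : f + S.transpose f + (f - S.transpose f) = (2 : ℤ) • f := by
      rw [two_zsmul]; abel
    rw [this]
    rw [Preadditive.zsmul_comp, IsIso.hom_inv_id]
  have := hloc _ _ (hsum ▸ h2)
  rcases this with hu | hv
  · left
    refine ⟨p, ?_, ?_⟩
    · have : p = (p ≫ inv f) ≫ f := by simp
      rw [this]; infer_instance
    · rw [hp, S.transpose_add hD, S.transpose_transpose]
      abel
  · right
    refine ⟨q, ?_, ?_⟩
    · have : q = (q ≫ inv f) ≫ f := by simp
      rw [this]; infer_instance
    · rw [hq, S.transpose_sub hD, S.transpose_transpose]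
      abel
end

section
/- Let k be a separably closed field of characteristic ≠ 2, let C be a k-linear additive category, and let (D, ev) be a duality on C whose underlying functor D : Cᵒᵖ → C is additive and k-linear. Let A be an object of C such that End(A) is a local ring that is finite-dimensional as a k-vector space. Then exactly one of the following holds: A is 1-self-dual; A is (−1)-self-dual; A is not self-dual. In particular, A cannot be simultaneously 1-self-dual and (−1)-self-dual. -/
open CategoryTheory Opposite

/-!
Any isomorphism `f₀ : A ⟶ D A` is the sum of its symmetric and skew halves `½(f₀ ± f₀ᵀ)`, and
locality of `End A` makes one of them an isomorphism.

If `f` is a symmetric and `g` a skew isomorphism, then `u = g ≫ f⁻¹` is a unit of `End A` which the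
anti-automorphism `e ↦ f ≫ D e ≫ f⁻¹` sends to `-u`. As `End A` is local, the polynomials `p` with
`p(u)` a nonunit form a prime ideal `(q)` of `k[X]`, nonzero as it contains the minimal polynomial
of `u`, and stable under `X ↦ -X`. Irreducible polynomials over a separably closed field have
degree a power of the characteristic exponent, which is odd, so `q(-X) = -q`; hence `q(0) = 0`, `q = X`,
and `u` is not a unit.
-/

open Polynomial

namespace Polynomial

theorem commute_aeval {k R : Type*} [CommSemiring k] [Semiring R] [Algebra k R] (u : R)
    (p q : k[X]) : Commute (aeval u p) (aeval u q) := by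
  rw [Commute, SemiconjBy, ← map_mul, mul_comm, map_mul]

variable {k : Type*} [Field k] [IsSepClosed k]

theorem odd_natDegree_of_irreducible (hchar : ringChar k ≠ 2) {q : k[X]} (hq : Irreducible q) :
    Odd q.natDegree := by
  obtain ⟨r, hr⟩ := ExpChar.exists k
  have hr_odd : Odd r := by
    rcases hr with _ | ⟨hprime⟩
    · exact odd_one
    · exact hprime.odd_of_ne_two fun h => hchar (h ▸ ringChar.eq k _)
  obtain ⟨g, hg_sep, n, rfl⟩ := hq.hasSeparableContraction r
  have hg : Irreducible g := of_irreducible_expand_pow hr_odd.pos.ne' hq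
  have hg_deg : g.natDegree = 1 :=
    natDegree_eq_of_degree_eq_some (IsSepClosed.degree_eq_one_of_irreducible k hg hg_sep)
  rw [natDegree_expand, hg_deg, one_mul]
  exact hr_odd.pow

/-- Over `k`, an irreducible `q` has odd degree, so `q(-X) = c • q` forces `c = -1` and then
`q(0) = -q(0)`. -/
theorem X_dvd_of_irreducible_of_dvd_comp_neg_X (hchar : ringChar k ≠ 2) {q : k[X]}
    (hq : Irreducible q) (hdvd : q ∣ q.comp (-X)) : X ∣ q := by
  obtain ⟨c, hc⟩ := hdvd
  have hc0 : c ≠ 0 := by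
    rintro rfl
    exact hq.ne_zero (comp_neg_X_eq_zero_iff.mp (by rw [hc, mul_zero]))
  have hdeg : c.natDegree = 0 := by
    have := congrArg natDegree hc
    rw [natDegree_comp, natDegree_neg, natDegree_X, mul_one, natDegree_mul hq.ne_zero hc0] at this
    omega
  rw [eq_C_of_natDegree_eq_zero hdeg] at hc
  have hlc := congrArg leadingCoeff hc
  rw [comp_neg_X_leadingCoeff_eq, leadingCoeff_mul, leadingCoeff_C,
    (odd_natDegree_of_irreducible hchar hq).neg_one_pow] at hlc
  have hc_neg : c.coeff 0 = -1 :=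
    mul_left_cancel₀ (leadingCoeff_ne_zero.mpr hq.ne_zero) (by linear_combination -hlc)
  have heval := congrArg (eval 0) hc
  rw [eval_comp, eval_neg, eval_X, neg_zero, eval_mul, eval_C, hc_neg, mul_neg_one,
    eq_neg_iff_add_eq_zero, ← two_mul] at heval
  rw [X_dvd_iff, coeff_zero_eq_eval_zero]
  exact (mul_eq_zero.mp heval).resolve_left (Ring.two_ne_zero hchar)

end Polynomial

namespace IsLocalRing

variable {k R : Type*} [Field k] [Ring R] [Algebra k R] [IsLocalRing R]

def aevalNonunitsIdeal (u : R) : Ideal k[X] where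
  carrier := {p | ¬IsUnit (aeval u p)}
  zero_mem' := by simp
  add_mem' {p q} hp hq := by
    change ¬IsUnit _
    rw [map_add]
    exact nonunits_add hp hq
  smul_mem' c p hp := by
    change ¬IsUnit (aeval u (c * p))
    rw [map_mul, (commute_aeval u c p).isUnit_mul_iff]
    exact fun h => hp h.2

theorem mem_aevalNonunitsIdeal {u : R} {p : k[X]} :
    p ∈ aevalNonunitsIdeal u ↔ ¬IsUnit (aeval u p) := Iff.rfl

instance (u : R) : (aevalNonunitsIdeal (k := k) u).IsPrime where
  ne_top' := by
    rw [Ne, Ideal.eq_top_iff_one, mem_aevalNonunitsIdeal, map_one, not_not]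
    exact isUnit_one
  mem_or_mem' {p q} hpq := by
    simp only [mem_aevalNonunitsIdeal, map_mul, (commute_aeval u p q).isUnit_mul_iff] at hpq ⊢
    tauto

theorem aevalNonunitsIdeal_ne_bot {u : R} (hu : IsIntegral k u) :
    aevalNonunitsIdeal (k := k) u ≠ ⊥ := fun h => minpoly.ne_zero hu <| by
  rw [← Ideal.mem_bot, ← h, mem_aevalNonunitsIdeal, minpoly.aeval]
  exact not_isUnit_zero

theorem comp_neg_X_mem_aevalNonunitsIdeal (τ : R →ₐ[k] Rᵐᵒᵖ) {u : R}
    (hτ : τ u = MulOpposite.op (-u)) {p : k[X]} (hp : p ∈ aevalNonunitsIdeal u) :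
    p.comp (-X) ∈ aevalNonunitsIdeal u := by
  rw [mem_aevalNonunitsIdeal, aeval_comp, map_neg, aeval_X]
  intro hunit
  have hτ_neg : τ (-u) = MulOpposite.op u := by rw [map_neg, hτ, MulOpposite.op_neg, neg_neg]
  apply hp
  rw [← isUnit_op, ← aeval_op_apply, ← hτ_neg, aeval_algHom_apply]
  exact hunit.map τ

theorem not_isUnit_of_antiAlgHom_eq_neg [IsSepClosed k] (hchar : ringChar k ≠ 2)
    (τ : R →ₐ[k] Rᵐᵒᵖ) {u : R} (hu : IsIntegral k u) (hτ : τ u = MulOpposite.op (-u)) :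
    ¬IsUnit u := by
  set I := aevalNonunitsIdeal (k := k) u
  have hq : Prime (Submodule.IsPrincipal.generator I) :=
    Submodule.IsPrincipal.prime_generator_of_isPrime I (aevalNonunitsIdeal_ne_bot hu)
  have hX : Associated X (Submodule.IsPrincipal.generator I) := by
    refine irreducible_X.associated_of_dvd hq.irreducible
      (X_dvd_of_irreducible_of_dvd_comp_neg_X hchar hq.irreducible ?_)
    rw [← Submodule.IsPrincipal.mem_iff_generator_dvd]
    exact comp_neg_X_mem_aevalNonunitsIdeal τ hτ (Submodule.IsPrincipal.generator_mem I)
  have hXI : X ∈ I := I.mem_of_dvd hX.symm.dvd (Submodule.IsPrincipal.generator_mem I)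
  rwa [mem_aevalNonunitsIdeal, aeval_X] at hXI

end IsLocalRing

namespace CategoryTheory

theorem isIso_or_isIso_of_isIso_add {C : Type*} [Category C] [Preadditive C] {A B : C}
    [IsLocalRing (End A)] {f g : A ⟶ B} [IsIso (f + g)] : IsIso f ∨ IsIso g := by
  have hunit : IsUnit (M := End A) (f ≫ inv (f + g) + g ≫ inv (f + g)) := by
    rw [← Preadditive.add_comp, IsIso.hom_inv_id]
    exact isUnit_one
  refine (IsLocalRing.isUnit_or_isUnit_of_isUnit_add hunit).imp (fun h => ?_) (fun h => ?_) <;>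
  · have := (isUnit_iff_isIso _).mp h
    exact IsIso.of_isIso_comp_right _ (inv (f + g))

end CategoryTheory

namespace CatWithDuality

variable {C : Type*} [Category C] (S : CatWithDuality C)

theorem transpose_transpose_s7 {A B : C} (g : B ⟶ S.D.obj (op A)) :
    S.transpose (S.transpose g) = g := by
  have hnat := S.ev.naturality g
  simp only [Functor.id_map, Functor.comp_map, Functor.rightOp_map] at hnat
  rw [transpose, transpose, op_comp, Functor.map_comp, ← Category.assoc, ← hnat, Category.assoc,
    S.ev_comp]
  exact Category.comp_id g

section Additive

variable [Preadditive C] [S.D.Additive]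

theorem transpose_add_s7 {A B : C} (g h : B ⟶ S.D.obj (op A)) :
    S.transpose (g + h) = S.transpose g + S.transpose h := by
  rw [transpose, transpose, transpose, op_add, Functor.map_add, Preadditive.comp_add]

theorem transpose_sub_s7 {A B : C} (g h : B ⟶ S.D.obj (op A)) :
    S.transpose (g - h) = S.transpose g - S.transpose h := by
  rw [transpose, transpose, transpose, op_sub, Functor.map_sub, Preadditive.comp_sub]

end Additive

variable {k : Type*} [Field k] [Preadditive C] [Linear k C]

theorem transpose_smul
    (hDlin : ∀ {X Y : C} (f : X ⟶ Y) (a : k), S.D.map (a • f).op = a • S.D.map f.op)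
    {A B : C} (g : B ⟶ S.D.obj (op A)) (a : k) :
    S.transpose (a • g) = a • S.transpose g := by
  rw [transpose, transpose, hDlin, Linear.comp_smul]

theorem exists_symm_or_skew_iso_of_isIso [S.D.Additive] (h2 : (2 : k) ≠ 0)
    (hDlin : ∀ {X Y : C} (f : X ⟶ Y) (a : k), S.D.map (a • f).op = a • S.D.map f.op)
    {A : C} [IsLocalRing (End A)] (f₀ : A ⟶ S.D.obj (op A)) [IsIso f₀] :
    (∃ f : A ⟶ S.D.obj (op A), IsIso f ∧ f = S.transpose f) ∨
    (∃ f : A ⟶ S.D.obj (op A), IsIso f ∧ f = -S.transpose f) := by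
  set h := (2 : k)⁻¹ • (f₀ + S.transpose f₀)
  set h' := (2 : k)⁻¹ • (f₀ - S.transpose f₀)
  have hsum : h + h' = f₀ := by
    rw [← smul_add, add_add_sub_cancel, ← two_smul k, smul_smul, inv_mul_cancel₀ h2, one_smul]
  have : IsIso (h + h') := hsum ▸ inferInstance
  refine (isIso_or_isIso_of_isIso_add (f := h) (g := h')).imp (fun hh => ⟨h, hh, ?_⟩)
    (fun hh' => ⟨h', hh', ?_⟩)
  · rw [transpose_smul S hDlin, transpose_add_s7, transpose_transpose_s7, add_comm]
  · rw [transpose_smul S hDlin, transpose_sub_s7, transpose_transpose_s7, ← smul_neg, neg_sub]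

@[simps]
noncomputable def adjointAlgHom [S.D.Additive]
    (hDlin : ∀ {X Y : C} (f : X ⟶ Y) (a : k), S.D.map (a • f).op = a • S.D.map f.op)
    {A : C} (f : A ⟶ S.D.obj (op A)) [IsIso f] : End A →ₐ[k] (End A)ᵐᵒᵖ where
  toFun e := MulOpposite.op (f ≫ S.D.map (e : A ⟶ A).op ≫ inv f)
  map_one' := by simp [End.one_def]
  map_mul' x y := by
    rw [← MulOpposite.op_mul, End.mul_def, End.mul_def]
    simp
  map_zero' := by simp
  map_add' x y := by
    change MulOpposite.op (f ≫ S.D.map ((x : A ⟶ A) + y).op ≫ inv f) = _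
    rw [op_add, Functor.map_add, Preadditive.add_comp, Preadditive.comp_add]
    rfl
  commutes' a := by
    simp [Algebra.algebraMap_eq_smul_one, End.one_def, hDlin]
    rfl

theorem adjointAlgHom_skew_comp_inv [S.D.Additive]
    (hDlin : ∀ {X Y : C} (f : X ⟶ Y) (a : k), S.D.map (a • f).op = a • S.D.map f.op)
    {A : C} {f g : A ⟶ S.D.obj (op A)} [IsIso f] (hf : f = S.transpose f)
    (hg : g = -S.transpose g) :
    S.adjointAlgHom hDlin f (g ≫ inv f) = MulOpposite.op (-(g ≫ inv f)) := by
  have hf_ev : f ≫ S.D.map (inv f).op = S.ev.app A :=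
    calc f ≫ S.D.map (inv f).op = S.transpose f ≫ S.D.map (inv f).op := congrArg (· ≫ _) hf
      _ = S.ev.app A := by
        rw [transpose, Category.assoc, ← Functor.map_comp, ← op_comp, IsIso.inv_hom_id, op_id]
        exact (congrArg _ (S.D.map_id _)).trans (Category.comp_id _)
  rw [adjointAlgHom_apply, op_comp, Functor.map_comp, ← Category.assoc, ← Category.assoc, hf_ev]
  conv_rhs => rw [hg, Preadditive.neg_comp, neg_neg]
  rfl

theorem not_symm_iso_and_skew_iso [S.D.Additive] [IsSepClosed k] (hchar : ringChar k ≠ 2)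
    (hDlin : ∀ {X Y : C} (f : X ⟶ Y) (a : k), S.D.map (a • f).op = a • S.D.map f.op)
    {A : C} [IsLocalRing (End A)] [FiniteDimensional k (End A)]
    {f g : A ⟶ S.D.obj (op A)} [IsIso f] [IsIso g] (hf : f = S.transpose f)
    (hg : g = -S.transpose g) : False :=
  IsLocalRing.not_isUnit_of_antiAlgHom_eq_neg hchar (S.adjointAlgHom hDlin f)
    (IsIntegral.of_finite k _) (S.adjointAlgHom_skew_comp_inv hDlin hf hg)
    ((isUnit_iff_isIso (g ≫ inv f : End A)).mpr inferInstance)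

end CatWithDuality

/-- Let `k` be a separably closed field of characteristic `≠ 2`, `C` a `k`-linear
additive category and `(D, ev)` an additive `k`-linear duality on `C`.  If `A` is
an object whose endomorphism ring is local and finite-dimensional over `k`, then
exactly one of the following holds: `A` is `1`-self-dual; `A` is `(-1)`-self-dual;
`A` is not self-dual. -/
theorem CatWithDuality.trichotomy_sep_closed {k : Type*} [Field k] [IsSepClosed k]
    (hchar : ringChar k ≠ 2)
    {C : Type*} [Category C] [Preadditive C] [Linear k C]
    (S : CatWithDuality C) (hD : S.D.Additive)
    (hDlin : ∀ {X Y : C} (f : X ⟶ Y) (a : k), S.D.map (a • f).op = a • S.D.map f.op)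
    (A : C)
    (hnz : Nontrivial (A ⟶ A))
    (hloc : ∀ u v : A ⟶ A, IsIso (u + v) → IsIso u ∨ IsIso v)
    (hfin : FiniteDimensional k (A ⟶ A)) :
    ((∃ f : A ⟶ S.D.obj (op A), IsIso f ∧ f = S.transpose f) ∧
      ¬(∃ f : A ⟶ S.D.obj (op A), IsIso f ∧ f = -S.transpose f) ∧
      (∃ f : A ⟶ S.D.obj (op A), IsIso f)) ∨
    (¬(∃ f : A ⟶ S.D.obj (op A), IsIso f ∧ f = S.transpose f) ∧
      (∃ f : A ⟶ S.D.obj (op A), IsIso f ∧ f = -S.transpose f) ∧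
      (∃ f : A ⟶ S.D.obj (op A), IsIso f)) ∨
    (¬(∃ f : A ⟶ S.D.obj (op A), IsIso f ∧ f = S.transpose f) ∧
      ¬(∃ f : A ⟶ S.D.obj (op A), IsIso f ∧ f = -S.transpose f) ∧
      ¬(∃ f : A ⟶ S.D.obj (op A), IsIso f)) := by
  have : Nontrivial (End A) := hnz
  have : IsLocalRing (End A) := .of_isUnit_or_isUnit_of_isUnit_add fun u v h => by
    simpa only [isUnit_iff_isIso] using hloc u v ((isUnit_iff_isIso (u + v)).mp h)
  have : FiniteDimensional k (End A) := hfin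
  have not_both : ∀ f g : A ⟶ S.D.obj (op A), IsIso f → f = S.transpose f →
      IsIso g → g = -S.transpose g → False := fun f g _ hf _ hg =>
    S.not_symm_iso_and_skew_iso hchar hDlin hf hg
  by_cases hsd : ∃ f : A ⟶ S.D.obj (op A), IsIso f
  · obtain ⟨f₀, hf₀⟩ := hsd
    rcases S.exists_symm_or_skew_iso_of_isIso (Ring.two_ne_zero hchar) hDlin f₀ with
      ⟨f, hf, hfs⟩ | ⟨g, hg, hgs⟩
    · exact .inl ⟨⟨f, hf, hfs⟩, fun ⟨g, hg, hgs⟩ => not_both f g hf hfs hg hgs, f₀, hf₀⟩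
    · exact .inr <| .inl ⟨fun ⟨f, hf, hfs⟩ => not_both f g hf hfs hg hgs, ⟨g, hg, hgs⟩, f₀, hf₀⟩
  · exact .inr <| .inr ⟨fun ⟨f, hf, _⟩ => hsd ⟨f, hf⟩, fun ⟨f, hf, _⟩ => hsd ⟨f, hf⟩, hsd⟩
end

section
/- Let (C, D_C, ev) and (D, D_D, ev) be categories with duality and let F, G : C → D be functors. Then for every natural transformation β : G ∘ D_C → D_D ∘ Fᵒᵖ (between functors Cᵒᵖ → D) one has (β^T)^T = β; consequently the map Nat(G ∘ D_C, D_D ∘ Fᵒᵖ) → Nat(F ∘ D_C, D_D ∘ Gᵒᵖ), β ↦ β^T, is a bijection. -/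
open CategoryTheory Opposite

/-- The transpose `β^T : F ∘ D_C ⟶ D_D ∘ Gᵒᵖ` of a natural transformation
`β : G ∘ D_C ⟶ D_D ∘ Fᵒᵖ`; its component at `A` is
`ev_{F (D_C A)}` followed by `D_D (β_{D_C A})` followed by `D_D (G (ev_A))`. -/
def natTranspose {C : Type*} [Category C] {D : Type*} [Category D]
    (SC : CatWithDuality C) (SD : CatWithDuality D)
    {F G : C ⥤ D} (β : SC.D ⋙ G ⟶ F.op ⋙ SD.D) :
    SC.D ⋙ F ⟶ G.op ⋙ SD.D where
  app X := SD.ev.app (F.obj (SC.D.obj X)) ≫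
    SD.D.map (β.app (op (SC.D.obj X))).op ≫
    SD.D.map (G.map (SC.ev.app X.unop)).op
  naturality := by
    intro X Y f
    dsimp
    have h1 := SD.ev.naturality (F.map (SC.D.map f))
    dsimp at h1
    rw [reassoc_of% h1]
    simp only [Functor.rightOp_map, ← Functor.map_comp, ← op_comp, Category.assoc]
    congr 2
    congr 1
    have h3 := β.naturality ((SC.D.map f).op)
    dsimp at h3
    rw [← h3]
    have h4 := SC.ev.naturality f.unop
    dsimp at h4
    rw [← Category.assoc, ← Functor.map_comp, ← h4, Functor.map_comp, Category.assoc]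


theorem natTranspose_invol {C : Type*} [Category C] {D : Type*} [Category D]
    (SC : CatWithDuality C) (SD : CatWithDuality D) {F G : C ⥤ D}
    (β : SC.D ⋙ G ⟶ F.op ⋙ SD.D) :
    natTranspose SC SD (natTranspose SC SD β) = β := by
  ext X
  dsimp [natTranspose]
  simp only [op_comp, Functor.map_comp, Category.assoc]
  have h1 := SD.ev.naturality (G.map (SC.ev.app (SC.D.obj X)))
  dsimp at h1
  rw [← reassoc_of% h1]
  have h2 := SD.ev.naturality (β.app (op (SC.D.obj (op (SC.D.obj X)))))
  dsimp at h2
  rw [← reassoc_of% h2]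
  have h3 := SD.ev_comp (F.obj (SC.D.obj (op (SC.D.obj X))))
  rw [reassoc_of% h3]
  have h4 := β.naturality ((SC.ev.app X.unop).op)
  dsimp at h4
  rw [← h4, ← Category.assoc, ← Functor.map_comp]
  have h5 := SC.ev_comp X.unop
  rw [h5]
  simp

/-- For categories with duality `(C, D_C, ev)` and `(D, D_D, ev)` and functors
`F, G : C ⥤ D`, the double transpose of a natural transformation
`β : G ∘ D_C ⟶ D_D ∘ Fᵒᵖ` is `β` itself; consequently transposition
`Nat(G ∘ D_C, D_D ∘ Fᵒᵖ) → Nat(F ∘ D_C, D_D ∘ Gᵒᵖ)` is a bijection. -/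
theorem natTranspose_natTranspose {C : Type*} [Category C] {D : Type*} [Category D]
    (SC : CatWithDuality C) (SD : CatWithDuality D) (F G : C ⥤ D) :
    (∀ β : SC.D ⋙ G ⟶ F.op ⋙ SD.D, natTranspose SC SD (natTranspose SC SD β) = β) ∧
    Function.Bijective
      (fun β : SC.D ⋙ G ⟶ F.op ⋙ SD.D => natTranspose SC SD β) := by
  refine ⟨fun β => natTranspose_invol SC SD β, ?_, fun γ => ⟨natTranspose SC SD γ, natTranspose_invol SC SD γ⟩⟩
  intro a b h
  have := congrArg (natTranspose SC SD) h
  rwa [natTranspose_invol, natTranspose_invol] at this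
end

section
/- Let (C, D_C, ev) and (D, D_D, ev) be categories with duality and let F : C → D be a fully faithful functor equipped with a symmetric natural isomorphism α : F ∘ D_C ≅ D_D ∘ Fᵒᵖ (symmetric meaning α = α^T). If A is an object of C such that F A is 1-self-dual in D, then A is 1-self-dual in C. -/
open CategoryTheory Opposite

/-- A fully faithful functor `F` between categories with duality, equipped with a
symmetric natural isomorphism `α : F ∘ D_C ≅ D_D ∘ Fᵒᵖ` (symmetric meaning
`α.hom = α.hom^T`), detects `1`-self-dual objects: if `F A` is `1`-self-dual,
then so is `A`. -/
theorem one_self_dual_of_map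
    {C : Type*} [Category C] {D : Type*} [Category D]
    (SC : CatWithDuality C) (SD : CatWithDuality D)
    (F : C ⥤ D) [F.Full] [F.Faithful] (α : SC.D ⋙ F ≅ F.op ⋙ SD.D)
    (hsym : α.hom = natTranspose SC SD α.hom)
    (A : C) (hA : ∃ g : F.obj A ⟶ SD.D.obj (op (F.obj A)), IsIso g ∧ g = SD.transpose g) :
    ∃ f : A ⟶ SC.D.obj (op A), IsIso f ∧ f = SC.transpose f := by
  obtain ⟨g, hg, hgsym⟩ := hA
  have hainv : α.inv.app (op A) = inv (α.hom.app (op A)) :=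
    IsIso.eq_inv_of_hom_inv_id (α.hom_inv_id_app (op A))
  let f : A ⟶ SC.D.obj (op A) := F.preimage (g ≫ inv (α.hom.app (op A)))
  have hf : F.map f = g ≫ inv (α.hom.app (op A)) := F.map_preimage _
  refine ⟨f, ?_, ?_⟩
  · have : IsIso (F.map f) := by rw [hf]; infer_instance
    exact isIso_of_fully_faithful F f
  -- the key claim coming from symmetry of `α`
  have key : F.map (SC.ev.app A) ≫ α.hom.app (op (SC.D.obj (op A))) =
      SD.ev.app (F.obj A) ≫ SD.D.map (α.hom.app (op A)).op := by
    conv_rhs => rw [hsym]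
    dsimp [natTranspose]
    simp only [op_comp, Functor.map_comp, Category.assoc]
    -- step 1: naturality of `SD.ev` at `F.map (SC.ev.app A)`
    have h1 := SD.ev.naturality (F.map (SC.ev.app A))
    dsimp at h1
    rw [← reassoc_of% h1]
    -- step 2: naturality of `SD.ev` at `α.hom.app (op (SC.D.obj (op A)))`
    have h2 := SD.ev.naturality (α.hom.app (op (SC.D.obj (op A))))
    dsimp at h2
    rw [← reassoc_of% h2]
    -- step 3: `ev_comp`
    rw [SD.ev_comp (F.obj (SC.D.obj (op A))), Category.comp_id]
  apply F.map_injective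
  rw [hf]
  show g ≫ inv (α.hom.app (op A)) = F.map (SC.ev.app A ≫ SC.D.map f.op)
  rw [F.map_comp]
  -- naturality of `α.hom` at `f.op`
  have hnat := α.hom.naturality f.op
  dsimp at hnat
  have hFD : F.map (SC.D.map f.op) = α.hom.app (op (SC.D.obj (op A))) ≫
      SD.D.map (F.map f).op ≫ inv (α.hom.app (op A)) := by
    rw [← Category.assoc, ← hnat]
    simp
  rw [hFD]
  rw [← cancel_mono (α.hom.app (op A))]
  simp only [Category.assoc, IsIso.inv_hom_id, Category.comp_id]
  rw [reassoc_of% key, ← Functor.map_comp, ← op_comp, hf]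
  simp only [Category.assoc, IsIso.inv_hom_id, Category.comp_id]
  exact hgsym
end

section
/- Let (C, D_C, ev) and (D, D_D, ev) be categories with duality, where D is an abelian category and the functor D_D : Dᵒᵖ → D sends epimorphisms of D to monomorphisms. Let E, F, G : C → D be functors, let π : E → F be a natural transformation all of whose components are epimorphisms, let ι : F → G be a natural transformation all of whose components are monomorphisms, and set α = ι ∘ π : E → G. Let β : G ∘ D_C → D_D ∘ Eᵒᵖ be a natural transformation such that the composite E ∘ D_C → G ∘ D_C → D_D ∘ Eᵒᵖ (α whiskered with D_C, followed by β) is a symmetric form transformation. Let γ : F ∘ D_C → D_D ∘ Fᵒᵖ be a natural transformation such that for every object A the square commutes: γ_A followed by D_D(π_A) equals ι_{D_C A} followed by β_A. Then γ is symmetric, i.e. γ = γ^T. -/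
open CategoryTheory Opposite

/-!
The hypothesis on `γ` says that the symmetric form `α_{D_C} ≫ β` is `γ` restricted along `π` on
both sides, `π_{D_C A} ≫ γ_A ≫ D_D(π_A)`. Transposition commutes with such restrictions, so
`γ` and `γ^T` have the same restriction; it is injective because the `π_A` are epimorphisms
and the `D_D(π_A)` monomorphisms.
-/

section RestrictForm

variable {C : Type*} [Category C] {D : Type*} [Category D]
  (SC : CatWithDuality C) (SD : CatWithDuality D) {F G F' G' : C ⥤ D}

def restrictForm (p : G' ⟶ G) (q : F' ⟶ F) (β : SC.D ⋙ G ⟶ F.op ⋙ SD.D) :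
    SC.D ⋙ G' ⟶ F'.op ⋙ SD.D :=
  Functor.whiskerLeft SC.D p ≫ β ≫ Functor.whiskerRight (NatTrans.op q) SD.D

@[simp]
lemma restrictForm_app (p : G' ⟶ G) (q : F' ⟶ F) (β : SC.D ⋙ G ⟶ F.op ⋙ SD.D) (X : Cᵒᵖ) :
    (restrictForm SC SD p q β).app X =
      p.app (SC.D.obj X) ≫ β.app X ≫ SD.D.map (q.app X.unop).op :=
  rfl

lemma natTranspose_restrictForm (p : G' ⟶ G) (q : F' ⟶ F) (β : SC.D ⋙ G ⟶ F.op ⋙ SD.D) :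
    natTranspose SC SD (restrictForm SC SD p q β) =
      restrictForm SC SD q p (natTranspose SC SD β) := by
  ext X
  have hev := SD.ev.naturality (q.app (SC.D.obj X))
  have hp := p.naturality (SC.ev.app X.unop)
  dsimp [natTranspose] at hev hp ⊢
  simp only [Functor.map_comp, Category.assoc, reassoc_of% hev]
  simp only [← Functor.map_comp, ← op_comp, hp]

lemma restrictForm_injective {p : G' ⟶ G} {q : F' ⟶ F} [∀ A, Epi (p.app A)]
    [∀ A, Mono (SD.D.map (q.app A).op)] :
    Function.Injective (restrictForm SC SD p q) := by
  intro β β' h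
  ext X
  have hX := congrArg (fun t => t.app X) h
  simpa only [restrictForm_app, cancel_epi, cancel_mono] using hX

end RestrictForm

theorem image_form_symmetric_general
    {C : Type*} [Category C] {D : Type*} [Category D]
    (SC : CatWithDuality C) (SD : CatWithDuality D)
    (hDD : ∀ {X Y : D} (f : X ⟶ Y), Epi f → Mono (SD.D.map f.op))
    (E F G : C ⥤ D) (π : E ⟶ F) (ι : F ⟶ G)
    (hπ : ∀ A : C, Epi (π.app A))
    (β : SC.D ⋙ G ⟶ E.op ⋙ SD.D)
    (hsym : Functor.whiskerLeft SC.D (π ≫ ι) ≫ β =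
      natTranspose SC SD (Functor.whiskerLeft SC.D (π ≫ ι) ≫ β))
    (γ : SC.D ⋙ F ⟶ F.op ⋙ SD.D)
    (hγ : ∀ A : C, γ.app (op A) ≫ SD.D.map (π.app A).op =
      ι.app (SC.D.obj (op A)) ≫ β.app (op A)) :
    γ = natTranspose SC SD γ := by
  have hα : Functor.whiskerLeft SC.D (π ≫ ι) ≫ β = restrictForm SC SD π π γ := by
    ext X
    simp [hγ X.unop]
  have : ∀ A, Mono (SD.D.map (π.app A).op) := fun A => hDD _ (hπ A)
  apply restrictForm_injective SC SD (p := π) (q := π)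
  rw [← natTranspose_restrictForm, ← hα]
  exact hsym

/-- Let `(C, D_C, ev)` and `(D, D_D, ev)` be categories with duality, `D` abelian,
and suppose `D_D` sends epimorphisms to monomorphisms.  Let `E, F, G : C ⥤ D`,
let `π : E ⟶ F` have epimorphic components and `ι : F ⟶ G` have monomorphic
components, and set `α = ι ∘ π`.  Let `β : G ∘ D_C ⟶ D_D ∘ Eᵒᵖ` be such that the
composite `E ∘ D_C → G ∘ D_C → D_D ∘ Eᵒᵖ` is symmetric, and let
`γ : F ∘ D_C ⟶ D_D ∘ Fᵒᵖ` satisfy `γ_A ≫ D_D(π_A) = ι_{D_C A} ≫ β_A` for all `A`.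
Then `γ` is symmetric. -/
theorem image_form_symmetric
    {C : Type*} [Category C] {D : Type*} [Category D] [Abelian D]
    (SC : CatWithDuality C) (SD : CatWithDuality D)
    (hDD : ∀ {X Y : D} (f : X ⟶ Y), Epi f → Mono (SD.D.map f.op))
    (E F G : C ⥤ D) (π : E ⟶ F) (ι : F ⟶ G)
    (hπ : ∀ A : C, Epi (π.app A)) (hι : ∀ A : C, Mono (ι.app A))
    (β : SC.D ⋙ G ⟶ E.op ⋙ SD.D)
    (hsym : Functor.whiskerLeft SC.D (π ≫ ι) ≫ β =
      natTranspose SC SD (Functor.whiskerLeft SC.D (π ≫ ι) ≫ β))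
    (γ : SC.D ⋙ F ⟶ F.op ⋙ SD.D)
    (hγ : ∀ A : C, γ.app (op A) ≫ SD.D.map (π.app A).op =
      ι.app (SC.D.obj (op A)) ≫ β.app (op A)) :
    γ = natTranspose SC SD γ :=
  image_form_symmetric_general SC SD hDD E F G π ι hπ β hsym γ hγ
end

section
/- Let T be a triangulated category equipped with a t-structure, with truncation functors τ^{≤0} and τ^{≥1}, canonical natural transformations ι : τ^{≤0} → id and π : id → τ^{≥1}, and for every object X a distinguished triangle τ^{≤0}X → X → τ^{≥1}X → (τ^{≤0}X)[1]. Let A → B → C → A[1] be a distinguished triangle with maps a, b, c, and suppose that the composite τ^{≤0}C → C → A[1] → (τ^{≥1}A)[1] (namely ι_C followed by c followed by (π_A)[1]) is zero. Then there exists a unique morphism c₀ : τ^{≤0}C → (τ^{≤0}A)[1] such that c₀ followed by (ι_A)[1] equals ι_C followed by c, and a unique morphism c₁ : τ^{≥1}C → (τ^{≥1}A)[1] such that π_C followed by c₁ equals c followed by (π_A)[1]; moreover the triangles τ^{≤0}A → τ^{≤0}B → τ^{≤0}C → (τ^{≤0}A)[1] (with maps τ^{≤0}a, τ^{≤0}b,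 c₀) and τ^{≥1}A → τ^{≥1}B → τ^{≥1}C → (τ^{≥1}A)[1] (with maps τ^{≥1}a, τ^{≥1}b, c₁) are distinguished. -/
/-!
Since `Hom(W, τ≤0 X) = Hom(W, X)` for `W ≤ 0`, a map `c₀` is a lift of `ι_{C'} ≫ c` along
`(ι_A)⟦1⟧`, and `ι_{C'} ≫ c ≫ (π_A)⟦1⟧` is exactly the obstruction to such a lift; dually for `c₁`.

To see that `τ≤0 A → τ≤0 B → τ≤0 C' → (τ≤0 A)⟦1⟧` is distinguished, complete `τ≤0 a` to a
distinguished triangle with third object `Z`. Then `Z ≤ 0`, and `(ι_A, ι_B)` extends to a morphism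
of triangles whose third component factors through `ι_{C'}` as `η : Z ⟶ τ≤0 C'`. The morphism `ι`
into the distinguished triangle `A → B → C' → A⟦1⟧` makes the truncated triangle exact under
`Hom(W, -)` for `W ≤ 0`, and that much exactness already lets the five lemma argument show that `η`
is an isomorphism. The `τ≥1` side is dual: one uses a distinguished triangle on `τ≥1 b` and the
functors `Hom(-, W)` for `W ≥ 1`.
-/

open CategoryTheory CategoryTheory.Limits CategoryTheory.Pretriangulated
open CategoryTheory.Triangulated

namespace CategoryTheory.Pretriangulated

variable {C : Type*} [Category C] [HasZeroObject C] [HasShift C ℤ] [Preadditive C]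
  [∀ n : ℤ, (CategoryTheory.shiftFunctor C n).Additive] [Pretriangulated C]

lemma Triangle.yoneda_exact₁ (T : Triangle C) (hT : T ∈ distTriang C) {W : C} (f : T.obj₁ ⟶ W)
    (hf : T.mor₃ ≫ f⟦(1 : ℤ)⟧' = 0) : ∃ g : T.obj₂ ⟶ W, f = T.mor₁ ≫ g := by
  obtain ⟨g, hg⟩ : ∃ g : T.obj₂⟦(1 : ℤ)⟧ ⟶ W⟦(1 : ℤ)⟧, f⟦1⟧' = (-T.mor₁⟦1⟧') ≫ g :=
    T.rotate.yoneda_exact₃ (rot_of_distTriang _ hT) (f⟦(1 : ℤ)⟧') hf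
  obtain ⟨g, rfl⟩ := (CategoryTheory.shiftFunctor C (1 : ℤ)).map_surjective g
  refine ⟨-g, (CategoryTheory.shiftFunctor C (1 : ℤ)).map_injective ?_⟩
  rw [Preadditive.comp_neg, Functor.map_neg, Functor.map_comp, hg, Preadditive.neg_comp]

lemma Triangle.comp_mor₂_injective {T : Triangle C} (hT : T ∈ distTriang C) {W : C}
    (hW : ∀ f : W ⟶ T.obj₁, f = 0) : Function.Injective fun g : W ⟶ T.obj₂ ↦ g ≫ T.mor₂ := by
  intro f g hfg
  obtain ⟨h, hh⟩ := T.coyoneda_exact₂ hT (f - g) (by simpa [sub_eq_zero] using hfg)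
  rwa [hW h, zero_comp, sub_eq_zero] at hh

lemma Triangle.mor₁_comp_injective {T : Triangle C} (hT : T ∈ distTriang C) {W : C}
    (hW : ∀ f : T.obj₃ ⟶ W, f = 0) : Function.Injective fun g : T.obj₂ ⟶ W ↦ T.mor₁ ≫ g := by
  intro f g hfg
  obtain ⟨h, hh⟩ := T.yoneda_exact₂ hT (f - g) (by simpa [sub_eq_zero] using hfg)
  rwa [hW h, comp_zero, sub_eq_zero] at hh

lemma Triangle.coyoneda_exact₂_of_hom {T' T : Triangle C} (φ : T' ⟶ T)
    (hT : T ∈ distTriang C) {W : C} (h₁ : Function.Surjective fun g : W ⟶ T'.obj₁ ↦ g ≫ φ.hom₁)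
    (h₂ : Function.Injective fun g : W ⟶ T'.obj₂ ↦ g ≫ φ.hom₂)
    (f : W ⟶ T'.obj₂) (hf : f ≫ T'.mor₂ = 0) : ∃ g, f = g ≫ T'.mor₁ := by
  obtain ⟨g, hg⟩ := T.coyoneda_exact₂ hT (f ≫ φ.hom₂)
    (by rw [Category.assoc, ← φ.comm₂, reassoc_of% hf, zero_comp])
  obtain ⟨g, rfl⟩ := h₁ g
  exact ⟨g, h₂ (by simp [hg, φ.comm₁])⟩

lemma Triangle.yoneda_exact₂_of_hom {T T' : Triangle C} (φ : T ⟶ T')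
    (hT : T ∈ distTriang C) {W : C} (h₂ : Function.Injective fun g : T'.obj₂ ⟶ W ↦ φ.hom₂ ≫ g)
    (h₃ : Function.Surjective fun g : T'.obj₃ ⟶ W ↦ φ.hom₃ ≫ g)
    (f : T'.obj₂ ⟶ W) (hf : T'.mor₁ ≫ f = 0) : ∃ g, f = T'.mor₂ ≫ g := by
  obtain ⟨g, hg⟩ := T.yoneda_exact₂ hT (φ.hom₂ ≫ f)
    (by rw [← Category.assoc, φ.comm₁, Category.assoc, hf, comp_zero])
  obtain ⟨g, rfl⟩ := h₃ g
  exact ⟨g, h₂ (by dsimp; rw [hg, ← φ.comm₂_assoc])⟩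

lemma Triangle.yoneda_exact₁_of_hom {T T' : Triangle C} (φ : T ⟶ T')
    (hT : T ∈ distTriang C) {W : C} (h₁ : Function.Injective fun g : T'.obj₁ ⟶ W ↦ φ.hom₁ ≫ g)
    (h₂ : Function.Surjective fun g : T'.obj₂ ⟶ W ↦ φ.hom₂ ≫ g)
    (f : T'.obj₁ ⟶ W) (hf : T'.mor₃ ≫ f⟦(1 : ℤ)⟧' = 0) : ∃ g, f = T'.mor₁ ≫ g := by
  obtain ⟨g, hg⟩ := T.yoneda_exact₁ hT (φ.hom₁ ≫ f)
    (by rw [Functor.map_comp, ← Category.assoc, φ.comm₃, Category.assoc, hf, comp_zero])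
  obtain ⟨g, rfl⟩ := h₂ g
  exact ⟨g, h₁ (by dsimp; rw [hg, ← φ.comm₁_assoc])⟩

lemma Triangle.isIso_hom₃_of_coyoneda_exact {T T' : Triangle C} (φ : T ⟶ T')
    (hT : T ∈ distTriang C) [IsIso φ.hom₁] [IsIso φ.hom₂]
    (h₃₁ : T'.mor₃ ≫ T'.mor₁⟦(1 : ℤ)⟧' = 0)
    (hex₂ : ∀ f : T.obj₃ ⟶ T'.obj₂, f ≫ T'.mor₂ = 0 → ∃ g, f = g ≫ T'.mor₁)
    (hex₃ : ∀ f : T'.obj₃ ⟶ T'.obj₃, f ≫ T'.mor₃ = 0 → ∃ g, f = g ≫ T'.mor₂) :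
    IsIso φ.hom₃ := by
  have comm₁ : inv φ.hom₁ ≫ T.mor₁ = T'.mor₁ ≫ inv φ.hom₂ := by
    rw [IsIso.inv_comp_eq, ← Category.assoc, IsIso.eq_comp_inv, φ.comm₁]
  obtain ⟨h, hh⟩ := T.coyoneda_exact₁ hT (T'.mor₃ ≫ (inv φ.hom₁)⟦(1 : ℤ)⟧')
    (by rw [Category.assoc, ← Functor.map_comp, comm₁, Functor.map_comp, reassoc_of% h₃₁,
      zero_comp])
  obtain ⟨k, hk⟩ := hex₃ (h ≫ φ.hom₃ - 𝟙 _) (by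
    rw [Preadditive.sub_comp, Category.assoc, ← φ.comm₃, ← reassoc_of% hh, ← Functor.map_comp,
      IsIso.inv_hom_id, Functor.map_id, Category.comp_id, Category.id_comp, sub_self])
  obtain ⟨σ, hσ⟩ : ∃ σ : T'.obj₃ ⟶ T.obj₃, σ ≫ φ.hom₃ = 𝟙 _ :=
    ⟨h - k ≫ inv φ.hom₂ ≫ T.mor₂, by rw [Preadditive.sub_comp, Category.assoc, Category.assoc,
      φ.comm₂, IsIso.inv_hom_id_assoc, ← hk, sub_sub_cancel]⟩
  have inj : ∀ x : T.obj₃ ⟶ T.obj₃, x ≫ φ.hom₃ = 0 → x = 0 := by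
    intro x hx
    obtain ⟨y, rfl⟩ := T.coyoneda_exact₃ hT x (by
      rw [← cancel_mono (φ.hom₁⟦(1 : ℤ)⟧'), Category.assoc, φ.comm₃, reassoc_of% hx, zero_comp,
        zero_comp])
    obtain ⟨z, hz⟩ := hex₂ (y ≫ φ.hom₂) (by rw [Category.assoc, ← φ.comm₂, ← Category.assoc, hx])
    rw [← IsIso.eq_comp_inv, Category.assoc, ← comm₁] at hz
    rw [hz, Category.assoc, Category.assoc, comp_distTriang_mor_zero₁₂ _ hT, comp_zero, comp_zero]
  exact ⟨σ, sub_eq_zero.1 (inj _ (by rw [Preadditive.sub_comp, Category.assoc, hσ,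
    Category.comp_id, Category.id_comp, sub_self])), hσ⟩

lemma Triangle.isIso_hom₁_of_yoneda_exact {T' T : Triangle C} (φ : T' ⟶ T)
    (hT : T ∈ distTriang C) [IsIso φ.hom₂] [IsIso φ.hom₃]
    (h₂₃ : T'.mor₂ ≫ T'.mor₃ = 0)
    (hex₁ : ∀ f : T'.obj₁ ⟶ T'.obj₁, T'.mor₃ ≫ f⟦(1 : ℤ)⟧' = 0 → ∃ g, f = T'.mor₁ ≫ g)
    (hex₂ : ∀ f : T'.obj₂ ⟶ T.obj₁, T'.mor₁ ≫ f = 0 → ∃ g, f = T'.mor₂ ≫ g) :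
    IsIso φ.hom₁ := by
  have comm₂ : T.mor₂ ≫ inv φ.hom₃ = inv φ.hom₂ ≫ T'.mor₂ := by
    rw [IsIso.comp_inv_eq, Category.assoc, IsIso.eq_inv_comp, φ.comm₂]
  obtain ⟨k, hk⟩ := T.yoneda_exact₃ hT (inv φ.hom₃ ≫ T'.mor₃)
    (by rw [reassoc_of% comm₂, h₂₃, comp_zero])
  obtain ⟨h, rfl⟩ := (CategoryTheory.shiftFunctor C (1 : ℤ)).map_surjective k
  obtain ⟨m, hm⟩ := hex₁ (𝟙 _ - φ.hom₁ ≫ h) (by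
    rw [Functor.map_sub, Functor.map_id, Preadditive.comp_sub, Category.comp_id,
      Functor.map_comp, ← Category.assoc, φ.comm₃, Category.assoc, ← hk,
      IsIso.hom_inv_id_assoc, sub_self])
  obtain ⟨ν, hν⟩ : ∃ ν : T.obj₁ ⟶ T'.obj₁, φ.hom₁ ≫ ν = 𝟙 _ :=
    ⟨h + T.mor₁ ≫ inv φ.hom₂ ≫ m, by rw [Preadditive.comp_add, ← Category.assoc φ.hom₁,
      ← φ.comm₁, Category.assoc, IsIso.hom_inv_id_assoc, ← hm, add_sub_cancel]⟩
  have inj : ∀ x : T.obj₁ ⟶ T.obj₁, φ.hom₁ ≫ x = 0 → x = 0 := by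
    intro x hx
    obtain ⟨y, rfl⟩ := T.yoneda_exact₁ hT x (by
      rw [← cancel_epi φ.hom₃, ← Category.assoc, ← φ.comm₃, Category.assoc, ← Functor.map_comp,
        hx, Functor.map_zero, comp_zero, comp_zero])
    obtain ⟨z, hz⟩ := hex₂ (φ.hom₂ ≫ y) (by rw [← Category.assoc, φ.comm₁, Category.assoc, hx])
    rw [← IsIso.eq_inv_comp, ← Category.assoc, ← comm₂] at hz
    rw [hz, Category.assoc, comp_distTriang_mor_zero₁₂_assoc _ hT, zero_comp]
  exact ⟨ν, hν, sub_eq_zero.1 (inj _ (by rw [Preadditive.comp_sub, reassoc_of% hν,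
    Category.comp_id, sub_self]))⟩

end CategoryTheory.Pretriangulated

namespace CategoryTheory.Triangulated.TStructure

variable {C : Type*} [Category C] [HasZeroObject C] [HasShift C ℤ] [Preadditive C]
  [∀ n : ℤ, (CategoryTheory.shiftFunctor C n).Additive] [Pretriangulated C] (t : TStructure C)

lemma surjective_comp_mor₁ {T : Triangle C} (hT : T ∈ distTriang C) (h₃ : t.ge 1 T.obj₃)
    {W : C} (hW : t.le 0 W) : Function.Surjective fun g : W ⟶ T.obj₁ ↦ g ≫ T.mor₁ := fun f ↦
  let ⟨g, hg⟩ := T.coyoneda_exact₂ hT f (t.zero' _ hW h₃)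
  ⟨g, hg.symm⟩

lemma injective_comp_mor₁ {T : Triangle C} (hT : T ∈ distTriang C) (h₃ : t.ge 1 T.obj₃)
    {W : C} (hW : t.le 1 W) : Function.Injective fun g : W ⟶ T.obj₁ ↦ g ≫ T.mor₁ :=
  Triangle.comp_mor₂_injective (inv_rot_of_distTriang _ hT) fun f ↦
    t.zero_of_isLE_of_isGE f 1 2 (by lia) ⟨hW⟩ ⟨t.ge_shift 1 (-1) 2 (by lia) _ h₃⟩

lemma injective_comp_shift_mor₁ {T : Triangle C} (hT : T ∈ distTriang C) (h₃ : t.ge 1 T.obj₃)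
    {W : C} (hW : t.le 0 W) :
    Function.Injective fun g : W ⟶ T.obj₁⟦(1 : ℤ)⟧ ↦ g ≫ T.mor₁⟦(1 : ℤ)⟧' := fun f g hfg ↦
  Triangle.comp_mor₂_injective (rot_of_distTriang _ (rot_of_distTriang _ hT))
    (fun h ↦ t.zero' h hW h₃)
    (show f ≫ (-T.mor₁⟦(1 : ℤ)⟧') = g ≫ (-T.mor₁⟦(1 : ℤ)⟧') by
      simp only [Preadditive.comp_neg, hfg])

lemma surjective_mor₂_comp {T : Triangle C} (hT : T ∈ distTriang C) (h₁ : t.le 0 T.obj₁)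
    {W : C} (hW : t.ge 1 W) : Function.Surjective fun g : T.obj₃ ⟶ W ↦ T.mor₂ ≫ g := fun f ↦
  let ⟨g, hg⟩ := T.yoneda_exact₂ hT f (t.zero' _ h₁ hW)
  ⟨g, hg.symm⟩

lemma injective_mor₂_comp {T : Triangle C} (hT : T ∈ distTriang C) (h₁ : t.le 0 T.obj₁)
    {W : C} (hW : t.ge 0 W) : Function.Injective fun g : T.obj₃ ⟶ W ↦ T.mor₂ ≫ g :=
  Triangle.mor₁_comp_injective (rot_of_distTriang _ hT) fun f ↦
    t.zero_of_isLE_of_isGE f (-1) 0 (by lia) ⟨t.le_shift 0 1 (-1) (by lia) _ h₁⟩ ⟨hW⟩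

lemma existsUnique_comp_shift_mor₁ {T : Triangle C} (hT : T ∈ distTriang C)
    (h₃ : t.ge 1 T.obj₃) {W : C} (hW : t.le 0 W) (f : W ⟶ T.obj₂⟦(1 : ℤ)⟧)
    (hf : f ≫ T.mor₂⟦(1 : ℤ)⟧' = 0) : ∃! g : W ⟶ T.obj₁⟦(1 : ℤ)⟧, g ≫ T.mor₁⟦(1 : ℤ)⟧' = f := by
  obtain ⟨g, hg⟩ : ∃ g : W ⟶ T.obj₁⟦(1 : ℤ)⟧, f = g ≫ (-T.mor₁⟦(1 : ℤ)⟧') :=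
    T.rotate.rotate.coyoneda_exact₃ (rot_of_distTriang _ (rot_of_distTriang _ hT)) f
      (show f ≫ (-T.mor₂⟦(1 : ℤ)⟧') = 0 by rw [Preadditive.comp_neg, hf, neg_zero])
  have hlift : (-g) ≫ T.mor₁⟦(1 : ℤ)⟧' = f := by
    rw [hg, Preadditive.neg_comp, Preadditive.comp_neg]
  exact ⟨-g, hlift, fun g' hg' ↦ t.injective_comp_shift_mor₁ hT h₃ hW (hg'.trans hlift.symm)⟩

lemma existsUnique_mor₂_comp {T : Triangle C} (hT : T ∈ distTriang C) (h₁ : t.le 0 T.obj₁)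
    {W : C} (hW : t.ge 0 W) (f : T.obj₂ ⟶ W) (hf : T.mor₁ ≫ f = 0) :
    ∃! g : T.obj₃ ⟶ W, T.mor₂ ≫ g = f := by
  obtain ⟨g, hg⟩ := T.yoneda_exact₂ hT f hf
  exact ⟨g, hg.symm, fun g' hg' ↦ t.injective_mor₂_comp hT h₁ hW (hg'.trans hg)⟩

structure Truncations where
  L : C ⥤ C
  G : C ⥤ C
  ι : L ⟶ 𝟭 C
  π : 𝟭 C ⟶ G
  δ : ∀ X : C, G.obj X ⟶ (L.obj X)⟦(1 : ℤ)⟧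
  le_L : ∀ X : C, t.le 0 (L.obj X)
  ge_G : ∀ X : C, t.ge 1 (G.obj X)
  distinguished : ∀ X : C, Triangle.mk (ι.app X) (π.app X) (δ X) ∈ distTriang C

namespace Truncations

variable {t} (D : t.Truncations) {A B C' : C} {a : A ⟶ B} {b : B ⟶ C'} {c : C' ⟶ A⟦(1 : ℤ)⟧}

lemma comp_L_map_shift_eq_zero (hT : Triangle.mk a b c ∈ distTriang C)
    {c₀ : D.L.obj C' ⟶ (D.L.obj A)⟦(1 : ℤ)⟧}
    (hc₀ : c₀ ≫ (D.ι.app A)⟦(1 : ℤ)⟧' = D.ι.app C' ≫ c) :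
    c₀ ≫ (D.L.map a)⟦(1 : ℤ)⟧' = 0 := by
  have h₃₁ : c ≫ a⟦(1 : ℤ)⟧' = 0 := comp_distTriang_mor_zero₃₁ _ hT
  refine t.injective_comp_shift_mor₁ (D.distinguished B) (D.ge_G B) (D.le_L C')
    (show (c₀ ≫ (D.L.map a)⟦(1 : ℤ)⟧') ≫ (D.ι.app B)⟦(1 : ℤ)⟧' = 0 ≫ (D.ι.app B)⟦(1 : ℤ)⟧' from ?_)
  rw [zero_comp, Category.assoc, ← Functor.map_comp, D.ι.naturality a, Functor.map_comp,
    reassoc_of% hc₀, Functor.id_map, h₃₁, comp_zero]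

lemma G_map_comp_eq_zero (hT : Triangle.mk a b c ∈ distTriang C)
    {c₁ : D.G.obj C' ⟶ (D.G.obj A)⟦(1 : ℤ)⟧}
    (hc₁ : D.π.app C' ≫ c₁ = c ≫ (D.π.app A)⟦(1 : ℤ)⟧') :
    D.G.map b ≫ c₁ = 0 := by
  have h₂₃ : b ≫ c = 0 := comp_distTriang_mor_zero₂₃ _ hT
  refine t.injective_mor₂_comp (D.distinguished B) (D.le_L B)
    (t.ge_shift 1 1 0 (by lia) _ (D.ge_G A))
    (show D.π.app B ≫ D.G.map b ≫ c₁ = D.π.app B ≫ 0 from ?_)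
  rw [← Category.assoc, ← D.π.naturality b, Functor.id_map, Category.assoc, hc₁,
    reassoc_of% h₂₃, zero_comp, comp_zero]

lemma L_map_triangle_distinguished (hT : Triangle.mk a b c ∈ distTriang C)
    (c₀ : D.L.obj C' ⟶ (D.L.obj A)⟦(1 : ℤ)⟧)
    (hc₀ : c₀ ≫ (D.ι.app A)⟦(1 : ℤ)⟧' = D.ι.app C' ≫ c) :
    Triangle.mk (D.L.map a) (D.L.map b) c₀ ∈ distTriang C := by
  let φ : Triangle.mk (D.L.map a) (D.L.map b) c₀ ⟶ Triangle.mk a b c :=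
    Triangle.homMk _ _ (D.ι.app A) (D.ι.app B) (D.ι.app C') (D.ι.naturality a)
      (D.ι.naturality b) hc₀
  have lift {W : C} (hW : t.le 0 W) (X : C) :
      Function.Surjective fun g : W ⟶ D.L.obj X ↦ g ≫ D.ι.app X :=
    t.surjective_comp_mor₁ (D.distinguished X) (D.ge_G X) hW
  have cancel {W : C} (hW : t.le 0 W) (X : C) :
      Function.Injective fun g : W ⟶ D.L.obj X ↦ g ≫ D.ι.app X :=
    t.injective_comp_mor₁ (D.distinguished X) (D.ge_G X) (t.le_zero_le _ hW)
  obtain ⟨Z, u, z, hZ⟩ := distinguished_cocone_triangle (D.L.map a)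
  have hZ_le : t.le 0 Z := (t.isLE₂ _ (rot_of_distTriang _ hZ) 0 ⟨D.le_L B⟩
    ⟨t.le_monotone (by lia) _ (t.le_shift 0 1 (-1) (by lia) _ (D.le_L A))⟩).le
  obtain ⟨ψ, hψ₂, hψ₃⟩ := complete_distinguished_triangle_morphism _ _ hZ hT (D.ι.app A)
    (D.ι.app B) (D.ι.naturality a)
  obtain ⟨η, rfl⟩ := lift hZ_le C' ψ
  dsimp at hψ₂ hψ₃
  let φZ : Triangle.mk (D.L.map a) u z ⟶ Triangle.mk (D.L.map a) (D.L.map b) c₀ :=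
    Triangle.homMk _ _ (𝟙 _) (𝟙 _) η
      (show D.L.map a ≫ 𝟙 _ = 𝟙 _ ≫ D.L.map a by simp)
      (show u ≫ η = 𝟙 _ ≫ D.L.map b by
        rw [Category.id_comp]
        exact cancel (D.le_L B) C' (show (u ≫ η) ≫ D.ι.app C' = D.L.map b ≫ D.ι.app C' by
          rw [Category.assoc]; exact hψ₂.trans (D.ι.naturality b).symm))
      (show z ≫ (𝟙 (D.L.obj A))⟦(1 : ℤ)⟧' = η ≫ c₀ by
        rw [Functor.map_id, Category.comp_id]
        exact t.injective_comp_shift_mor₁ (D.distinguished A) (D.ge_G A) hZ_le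
          (show z ≫ (D.ι.app A)⟦(1 : ℤ)⟧' = (η ≫ c₀) ≫ (D.ι.app A)⟦(1 : ℤ)⟧' by
            rw [Category.assoc, hc₀]; exact hψ₃.trans (Category.assoc _ _ _)))
  have : IsIso φZ.hom₁ := inferInstanceAs (IsIso (𝟙 _))
  have : IsIso φZ.hom₂ := inferInstanceAs (IsIso (𝟙 _))
  have : IsIso φZ.hom₃ :=
    Triangle.isIso_hom₃_of_coyoneda_exact φZ hZ (D.comp_L_map_shift_eq_zero hT hc₀)
      (Triangle.coyoneda_exact₂_of_hom φ hT (lift hZ_le A) (cancel hZ_le B))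
      (Triangle.coyoneda_exact₂_of_hom ((rotate C).map φ) (rot_of_distTriang _ hT)
        (lift (D.le_L C') B) (cancel (D.le_L C') C'))
  have := Triangle.isIso_of_isIsos φZ inferInstance inferInstance inferInstance
  exact isomorphic_distinguished _ hZ _ (asIso φZ).symm

lemma G_map_triangle_distinguished (hT : Triangle.mk a b c ∈ distTriang C)
    (c₁ : D.G.obj C' ⟶ (D.G.obj A)⟦(1 : ℤ)⟧)
    (hc₁ : D.π.app C' ≫ c₁ = c ≫ (D.π.app A)⟦(1 : ℤ)⟧') :
    Triangle.mk (D.G.map a) (D.G.map b) c₁ ∈ distTriang C := by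
  let φ : Triangle.mk a b c ⟶ Triangle.mk (D.G.map a) (D.G.map b) c₁ :=
    Triangle.homMk _ _ (D.π.app A) (D.π.app B) (D.π.app C') (D.π.naturality a)
      (D.π.naturality b) hc₁.symm
  have desc {W : C} (hW : t.ge 1 W) (X : C) :
      Function.Surjective fun g : D.G.obj X ⟶ W ↦ D.π.app X ≫ g :=
    t.surjective_mor₂_comp (D.distinguished X) (D.le_L X) hW
  have cancel {W : C} (hW : t.ge 0 W) (X : C) :
      Function.Injective fun g : D.G.obj X ⟶ W ↦ D.π.app X ≫ g :=
    t.injective_mor₂_comp (D.distinguished X) (D.le_L X) hW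
  obtain ⟨F, v, w, hF⟩ := distinguished_cocone_triangle₁ (D.G.map b)
  have hF_ge : t.ge 1 F := (t.isGE₂ _ (inv_rot_of_distTriang _ hF) 1
    ⟨t.ge_antitone (by lia) _ (t.ge_shift 1 (-1) 2 (by lia) _ (D.ge_G C'))⟩ ⟨D.ge_G B⟩).ge
  obtain ⟨φ₀, hφ₀₁, hφ₀₃⟩ := complete_distinguished_triangle_morphism₁ _ _ hT hF (D.π.app B)
    (D.π.app C') (D.π.naturality b)
  obtain ⟨μ, rfl⟩ := desc hF_ge A φ₀
  dsimp at hφ₀₁ hφ₀₃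
  let φF : Triangle.mk (D.G.map a) (D.G.map b) c₁ ⟶ Triangle.mk v (D.G.map b) w :=
    Triangle.homMk _ _ μ (𝟙 _) (𝟙 _)
      (show D.G.map a ≫ 𝟙 _ = μ ≫ v by
        rw [Category.comp_id]
        exact cancel (t.ge_one_le _ (D.ge_G B)) A
          (show D.π.app A ≫ D.G.map a = D.π.app A ≫ μ ≫ v from
            (D.π.naturality a).symm.trans (hφ₀₁.trans (Category.assoc _ _ _))))
      (show D.G.map b ≫ 𝟙 _ = 𝟙 _ ≫ D.G.map b by simp)
      (show c₁ ≫ μ⟦(1 : ℤ)⟧' = 𝟙 _ ≫ w by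
        rw [Category.id_comp]
        exact cancel (t.ge_shift 1 1 0 (by lia) _ hF_ge) C'
          (show D.π.app C' ≫ c₁ ≫ μ⟦(1 : ℤ)⟧' = D.π.app C' ≫ w by
            rw [← Category.assoc, hc₁, Category.assoc, ← Functor.map_comp]; exact hφ₀₃))
  have : IsIso φF.hom₂ := inferInstanceAs (IsIso (𝟙 _))
  have : IsIso φF.hom₃ := inferInstanceAs (IsIso (𝟙 _))
  have : IsIso φF.hom₁ :=
    Triangle.isIso_hom₁_of_yoneda_exact φF hF (D.G_map_comp_eq_zero hT hc₁)
      (Triangle.yoneda_exact₁_of_hom φ hT (cancel (t.ge_one_le _ (D.ge_G A)) A)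
        (desc (D.ge_G A) B))
      (Triangle.yoneda_exact₂_of_hom φ hT (cancel (t.ge_one_le _ hF_ge) B) (desc hF_ge C'))
  have := Triangle.isIso_of_isIsos φF inferInstance inferInstance inferInstance
  exact isomorphic_distinguished _ hF _ (asIso φF)

end Truncations

end CategoryTheory.Triangulated.TStructure

/-- Let `T` be a triangulated category with a t-structure `t`, with truncation
functors `τ≤0 = L` and `τ≥1 = G` (i.e. `L X` satisfies `t.LE 0`, `G X` satisfies
`t.GE 1`), canonical transformations `ι : L ⟶ 𝟭` and `π : 𝟭 ⟶ G`, and connecting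
maps `δ X : G X ⟶ (L X)⟦1⟧` making `L X → X → G X → (L X)⟦1⟧` distinguished for
every `X`.  Let `A →a B →b C' →c A⟦1⟧` be a distinguished triangle such that the
composite `ι_{C'} ≫ c ≫ (π_A)⟦1⟧` vanishes.  Then there is a unique
`c₀ : L C' ⟶ (L A)⟦1⟧` with `c₀ ≫ (ι_A)⟦1⟧ = ι_{C'} ≫ c` and a unique
`c₁ : G C' ⟶ (G A)⟦1⟧` with `π_{C'} ≫ c₁ = c ≫ (π_A)⟦1⟧`; moreover the resulting
truncated triangles `L A → L B → L C' → (L A)⟦1⟧` and `G A → G B → G C' → (G A)⟦1⟧`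
are distinguished. -/
theorem truncation_nine_diagram
    {C : Type*} [Category C] [HasZeroObject C] [HasShift C ℤ] [Preadditive C]
    [∀ n : ℤ, (CategoryTheory.shiftFunctor C n).Additive] [Pretriangulated C]
    (t : TStructure C)
    (L G : C ⥤ C) (ι : L ⟶ 𝟭 C) (π : 𝟭 C ⟶ G)
    (δ : ∀ X : C, G.obj X ⟶ (L.obj X)⟦(1 : ℤ)⟧)
    (hL : ∀ X : C, t.le 0 (L.obj X)) (hG : ∀ X : C, t.ge 1 (G.obj X))
    (htr : ∀ X : C, Triangle.mk (ι.app X) (π.app X) (δ X) ∈ distTriang C)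
    (A B C' : C) (a : A ⟶ B) (b : B ⟶ C') (c : C' ⟶ A⟦(1 : ℤ)⟧)
    (hdist : Triangle.mk a b c ∈ distTriang C)
    (hz : ι.app C' ≫ c ≫ (π.app A)⟦(1 : ℤ)⟧' = 0) :
    (∃! c₀ : L.obj C' ⟶ (L.obj A)⟦(1 : ℤ)⟧,
        c₀ ≫ (ι.app A)⟦(1 : ℤ)⟧' = ι.app C' ≫ c) ∧
    (∀ c₀ : L.obj C' ⟶ (L.obj A)⟦(1 : ℤ)⟧,
        c₀ ≫ (ι.app A)⟦(1 : ℤ)⟧' = ι.app C' ≫ c →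
        Triangle.mk (L.map a) (L.map b) c₀ ∈ distTriang C) ∧
    (∃! c₁ : G.obj C' ⟶ (G.obj A)⟦(1 : ℤ)⟧,
        π.app C' ≫ c₁ = c ≫ (π.app A)⟦(1 : ℤ)⟧') ∧
    (∀ c₁ : G.obj C' ⟶ (G.obj A)⟦(1 : ℤ)⟧,
        π.app C' ≫ c₁ = c ≫ (π.app A)⟦(1 : ℤ)⟧' →
        Triangle.mk (G.map a) (G.map b) c₁ ∈ distTriang C) := by
  let D : t.Truncations := ⟨L, G, ι, π, δ, hL, hG, htr⟩
  refine ⟨?_, D.L_map_triangle_distinguished hdist, ?_, D.G_map_triangle_distinguished hdist⟩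
  · exact t.existsUnique_comp_shift_mor₁ (htr A) (hG A) (hL C') _
      ((Category.assoc _ _ _).trans hz)
  · exact t.existsUnique_mor₂_comp (htr C') (hL C') (t.ge_shift 1 1 0 (by lia) _ (hG A)) _ hz
end

section
/- Let R be a ring, M an R-module, and N : M → M an R-linear endomorphism that is nilpotent (N^d = 0 for some d ≥ 0). Then there exists a unique increasing filtration (W_j)_{j ∈ ℤ} of M by R-submodules such that: W_j = 0 for all sufficiently small j and W_j = M for all sufficiently large j; N(W_j) ⊆ W_{j−2} for all j; and for every k ≥ 0, the map induced by N^k (which carries W_k into W_{−k} and W_{k−1} into W_{−k−1}) from W_k/W_{k−1} to W_{−k}/W_{−k−1} is an isomorphism. -/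
/-- `W` is a monodromy filtration for a nilpotent endomorphism `N` of an
`R`-module `M`: an increasing filtration by submodules, equal to `⊥` for
sufficiently small indices and to `⊤` for sufficiently large indices, satisfying
`N (W j) ⊆ W (j - 2)`, and such that for every `k ≥ 0` the map
`W k / W (k-1) → W (-k) / W (-k-1)` induced by `N ^ k` is an isomorphism
(expressed elementwise: it is injective and surjective). -/
def IsMonodromyFiltration {R M : Type*} [Ring R] [AddCommGroup M] [Module R M]
    (N : Module.End R M) (W : ℤ → Submodule R M) : Prop :=
  Monotone W ∧
  (∃ a : ℤ, ∀ j ≤ a, W j = ⊥) ∧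
  (∃ b : ℤ, ∀ j, b ≤ j → W j = ⊤) ∧
  (∀ j : ℤ, ∀ x ∈ W j, N x ∈ W (j - 2)) ∧
  (∀ k : ℕ, ∀ x ∈ W (k : ℤ), (N ^ k) x ∈ W (-(k : ℤ) - 1) → x ∈ W ((k : ℤ) - 1)) ∧
  (∀ k : ℕ, ∀ y ∈ W (-(k : ℤ)), ∃ x ∈ W (k : ℤ), y - (N ^ k) x ∈ W (-(k : ℤ) - 1))

namespace MonodromyAux

variable {R M : Type*} [Ring R] [AddCommGroup M] [Module R M]

def MF (N : Module.End R M) (P Q : Submodule R M) (W : ℤ → Submodule R M) : Prop :=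
  Monotone W ∧
  (∃ a : ℤ, ∀ j ≤ a, W j = P) ∧
  (∃ b : ℤ, ∀ j, b ≤ j → W j = Q) ∧
  (∀ j : ℤ, ∀ x ∈ W j, N x ∈ W (j - 2)) ∧
  (∀ k : ℕ, ∀ x ∈ W (k : ℤ), (N ^ k) x ∈ W (-(k : ℤ) - 1) → x ∈ W ((k : ℤ) - 1)) ∧
  (∀ k : ℕ, ∀ y ∈ W (-(k : ℤ)), ∃ x ∈ W (k : ℤ), y - (N ^ k) x ∈ W (-(k : ℤ) - 1))

lemma pow_stab (N : Module.End R M) {S : Submodule R M} (hS : ∀ x ∈ S, N x ∈ S) :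
    ∀ (k : ℕ), ∀ x ∈ S, (N ^ k) x ∈ S := by
  intro k
  induction k with
  | zero => intro x hx; simpa using hx
  | succ k ih =>
    intro x hx
    rw [pow_succ', Module.End.mul_apply]
    exact hS _ (ih x hx)

lemma pow_split (N : Module.End R M) {s κ : ℕ} (h : s ≤ κ) (x : M) :
    (N ^ κ) x = (N ^ (κ - s)) ((N ^ s) x) := by
  conv_lhs => rw [show κ = κ - s + s by omega, pow_add, Module.End.mul_apply]

lemma MF.le_left {N : Module.End R M} {P Q : Submodule R M} {W : ℤ → Submodule R M}
    (h : MF N P Q W) (j : ℤ) : P ≤ W j := by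
  obtain ⟨hmono, ⟨a, ha⟩, -⟩ := h
  calc P = W (min a j) := (ha _ (min_le_left _ _)).symm
  _ ≤ W j := hmono (min_le_right _ _)

lemma MF.le_right {N : Module.End R M} {P Q : Submodule R M} {W : ℤ → Submodule R M}
    (h : MF N P Q W) (j : ℤ) : W j ≤ Q := by
  obtain ⟨hmono, -, ⟨b, hb⟩, -⟩ := h
  calc W j ≤ W (max b j) := hmono (le_max_right _ _)
  _ = Q := hb _ (le_max_left _ _)

lemma MF.npow {N : Module.End R M} {P Q : Submodule R M} {W : ℤ → Submodule R M}
    (h : MF N P Q W) (k : ℕ) (j : ℤ) : ∀ x ∈ W j, (N ^ k) x ∈ W (j - 2 * k) := by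
  induction k with
  | zero => intro x hx; simpa using hx
  | succ k ih =>
    intro x hx
    have h2 : j - 2 * ((k + 1 : ℕ) : ℤ) = (j - 2 * k) - 2 := by push_cast; ring
    rw [h2, pow_succ', Module.End.mul_apply]
    exact h.2.2.2.1 _ _ (ih x hx)

lemma MF.high {N : Module.End R M} {P Q : Submodule R M} {W : ℤ → Submodule R M}
    (h : MF N P Q W) (s : ℕ) (hP : ∀ x ∈ P, N x ∈ P) (hs : ∀ x ∈ Q, (N ^ s) x ∈ P) :
    ∀ j : ℤ, (s : ℤ) - 1 ≤ j → W j = Q := by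
  have step : ∀ κ : ℕ, s ≤ κ → W (κ : ℤ) ≤ W ((κ : ℤ) - 1) := by
    intro κ hκ x hx
    apply h.2.2.2.2.1 κ x hx
    have h1 : (N ^ κ) x ∈ P := by
      rw [pow_split N hκ]
      exact pow_stab N hP _ _ (hs x (h.le_right _ hx))
    exact h.le_left _ h1
  have chain : ∀ n : ℕ, W ((s : ℤ) - 1 + n) ≤ W ((s : ℤ) - 1) := by
    intro n
    induction n with
    | zero => simp
    | succ n ih =>
      have e1 : (s : ℤ) - 1 + ((n : ℤ) + 1) = ((s + n : ℕ) : ℤ) := by push_cast; ring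
      have e2 : ((s + n : ℕ) : ℤ) - 1 = (s : ℤ) - 1 + n := by push_cast; ring
      calc W ((s : ℤ) - 1 + ((n + 1 : ℕ) : ℤ)) = W ((s + n : ℕ) : ℤ) := congrArg W (by push_cast; ring)
      _ ≤ W (((s + n : ℕ) : ℤ) - 1) := step _ (by omega)
      _ = W ((s : ℤ) - 1 + n) := by rw [e2]
      _ ≤ W ((s : ℤ) - 1) := ih
  obtain ⟨b, hb⟩ := h.2.2.1
  intro j hj
  refine le_antisymm (h.le_right j) ?_
  set t : ℤ := max b ((s : ℤ) - 1) with ht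
  have hQt : W t = Q := hb _ (le_max_left _ _)
  have h3 : (s : ℤ) - 1 + (((t - ((s : ℤ) - 1)).toNat : ℤ)) = t := by
    rw [Int.toNat_of_nonneg (by omega)]; ring
  calc Q = W t := hQt.symm
  _ = W ((s : ℤ) - 1 + (((t - ((s : ℤ) - 1)).toNat : ℤ))) := by rw [h3]
  _ ≤ W ((s : ℤ) - 1) := chain _
  _ ≤ W j := h.1 hj

lemma MF.low {N : Module.End R M} {P Q : Submodule R M} {W : ℤ → Submodule R M}
    (h : MF N P Q W) (s : ℕ) (hP : ∀ x ∈ P, N x ∈ P) (hs : ∀ x ∈ Q, (N ^ s) x ∈ P) :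
    ∀ j : ℤ, j ≤ -(s : ℤ) → W j = P := by
  have step : ∀ κ : ℕ, s ≤ κ → W (-(κ : ℤ)) ≤ W (-(κ : ℤ) - 1) := by
    intro κ hκ y hy
    obtain ⟨x, hx, hyx⟩ := h.2.2.2.2.2 κ y hy
    have h1 : (N ^ κ) x ∈ W (-(κ : ℤ) - 1) := by
      apply h.le_left
      rw [pow_split N hκ]
      exact pow_stab N hP _ _ (hs x (h.le_right _ hx))
    have := add_mem hyx h1
    simpa using this
  have chain : ∀ n : ℕ, W (-(s : ℤ)) ≤ W (-(s : ℤ) - n) := by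
    intro n
    induction n with
    | zero => simp
    | succ n ih =>
      have e1 : -(s : ℤ) - n = -((s + n : ℕ) : ℤ) := by push_cast; ring
      have e2 : -(s : ℤ) - ((n + 1 : ℕ) : ℤ) = -((s + n : ℕ) : ℤ) - 1 := by push_cast; ring
      calc W (-(s : ℤ)) ≤ W (-(s : ℤ) - n) := ih
      _ = W (-((s + n : ℕ) : ℤ)) := by rw [e1]
      _ ≤ W (-((s + n : ℕ) : ℤ) - 1) := step _ (by omega)
      _ = W (-(s : ℤ) - ((n + 1 : ℕ) : ℤ)) := by rw [e2]
  obtain ⟨a, ha⟩ := h.2.1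
  intro j hj
  refine le_antisymm ?_ (h.le_left j)
  set t : ℤ := min a (-(s : ℤ)) with ht
  have hPt : W t = P := ha _ (min_le_left _ _)
  have h3 : -(s : ℤ) - (((-(s : ℤ)) - t).toNat : ℤ) = t := by
    rw [Int.toNat_of_nonneg (by omega)]; ring
  calc W j ≤ W (-(s : ℤ)) := h.1 hj
  _ ≤ W (-(s : ℤ) - (((-(s : ℤ)) - t).toNat : ℤ)) := chain _
  _ = W t := by rw [h3]
  _ = P := hPt

lemma key (N : Module.End R M) (d : ℕ) :
    ∀ P Q : Submodule R M, P ≤ Q → (∀ x ∈ Q, N x ∈ Q) → (∀ x ∈ P, N x ∈ P) →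
      (∀ x ∈ Q, (N ^ d) x ∈ P) → ∃! W : ℤ → Submodule R M, MF N P Q W := by
  induction d with
  | zero =>
    intro P Q hPQ hQ hP hd
    have hQP : Q ≤ P := fun x hx => by simpa using hd x hx
    have hPQ' : P = Q := le_antisymm hPQ hQP
    refine ⟨fun _ => P, ⟨monotone_const, ⟨0, fun _ _ => rfl⟩, ⟨0, fun _ _ => hPQ'⟩,
      fun j x hx => hP x hx, fun k x hx _ => hx, ?_⟩, ?_⟩
    · intro k y hy
      exact ⟨0, zero_mem _, by simpa using hy⟩
    · intro W hW
      funext j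
      exact le_antisymm ((hW.le_right j).trans hQP) (hW.le_left j)
  | succ m ih =>
    intro P Q hPQ hQ hP hd
    rcases Nat.eq_zero_or_pos m with rfl | hm
    · -- d = 1
      have hd1 : ∀ x ∈ Q, N x ∈ P := fun x hx => by simpa using hd x hx
      refine ⟨fun j => if j < 0 then P else Q, ⟨?_, ⟨-1, ?_⟩, ⟨0, ?_⟩, ?_, ?_, ?_⟩, ?_⟩
      · intro i j hij
        dsimp only
        by_cases hi : i < 0 <;> by_cases hj : j < 0 <;> simp [hi, hj]
        · exact hPQ
        · omega
      · intro j hj; dsimp only; rw [if_pos (by omega)]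
      · intro j hj; dsimp only; rw [if_neg (by omega)]
      · intro j x hx
        have hxQ : x ∈ Q := by
          revert hx; dsimp only; split <;> intro hx
          exacts [hPQ hx, hx]
        have hNx : N x ∈ P := hd1 x hxQ
        dsimp only; split
        · exact hNx
        · exact hPQ hNx
      · intro k x hx hk
        dsimp only at hx hk ⊢
        rcases Nat.eq_zero_or_pos k with rfl | hk1
        · rw [if_pos (by omega)]
          simpa using hk
        · rw [if_neg (by omega)]
          rw [if_neg (by omega)] at hx
          exact hx
      · intro k y hy
        dsimp only at hy ⊢
        rcases Nat.eq_zero_or_pos k with rfl | hk1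
        · rw [if_neg (by omega)] at hy
          refine ⟨y, by rw [if_neg (by omega)]; exact hy, ?_⟩
          rw [if_pos (by omega)]
          simp
        · rw [if_pos (by omega)] at hy
          refine ⟨0, zero_mem _, ?_⟩
          rw [if_pos (by omega)]
          simpa using hy
      · intro W hW
        have hd' : ∀ x ∈ Q, (N ^ (0 + 1)) x ∈ P := hd
        have htop := hW.high (0 + 1) hP hd'
        have hbot := hW.low (0 + 1) hP hd'
        funext j
        by_cases hj : j < 0
        · rw [if_pos hj, hbot j (by push_cast; omega)]
        · rw [if_neg hj, htop j (by push_cast; omega)]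
    · -- step: exponent m + 1, m ≥ 1
      set Pm : Submodule R M := Submodule.map (N ^ m) Q ⊔ P with hPmdef
      set Qm : Submodule R M := Q ⊓ Submodule.comap (N ^ m) P with hQmdef
      have hcomm : ∀ x : M, (N ^ m) (N x) = (N ^ (m + 1)) x := fun x => by
        rw [← Module.End.mul_apply, ← pow_succ]
      have hcomm' : ∀ x : M, N ((N ^ m) x) = (N ^ (m + 1)) x := fun x => by
        rw [← Module.End.mul_apply, ← pow_succ']
      have hcomm2 : ∀ x : M, (N ^ (m - 1)) (N x) = (N ^ m) x := fun x => by
        rw [← Module.End.mul_apply, ← pow_succ, show m - 1 + 1 = m by omega]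
      have hcomm2' : ∀ x : M, N ((N ^ (m - 1)) x) = (N ^ m) x := fun x => by
        rw [← Module.End.mul_apply, ← pow_succ', show m - 1 + 1 = m by omega]
      have hQmmem : ∀ x : M, x ∈ Qm ↔ x ∈ Q ∧ (N ^ m) x ∈ P := fun x => by
        rw [hQmdef, Submodule.mem_inf, Submodule.mem_comap]
      have f1 : ∀ x ∈ Q, (N ^ m) ((N ^ m) x) ∈ P := by
        intro x hx
        rw [← Module.End.mul_apply, ← pow_add, pow_split N (show m + 1 ≤ m + m by omega)]
        exact pow_stab N hP _ _ (hd x hx)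
      have hPmQm : Pm ≤ Qm := by
        rw [hPmdef]
        refine sup_le ?_ ?_
        · intro y hy
          obtain ⟨q, hq, rfl⟩ := Submodule.mem_map.mp hy
          exact (hQmmem _).mpr ⟨pow_stab N hQ m q hq, f1 q hq⟩
        · intro p hp
          exact (hQmmem _).mpr ⟨hPQ hp, pow_stab N hP m p hp⟩
      have hQmN : ∀ x ∈ Qm, N x ∈ Qm := by
        intro x hx
        obtain ⟨hx1, hx2⟩ := (hQmmem x).mp hx
        refine (hQmmem _).mpr ⟨hQ x hx1, ?_⟩
        rw [hcomm, ← hcomm']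
        exact hP _ hx2
      have hPmNP : ∀ y ∈ Pm, N y ∈ P := by
        intro y hy
        rw [hPmdef] at hy
        obtain ⟨u, hu, p, hp, rfl⟩ := Submodule.mem_sup.mp hy
        obtain ⟨q, hq, rfl⟩ := Submodule.mem_map.mp hu
        rw [map_add, hcomm']
        exact add_mem (hd q hq) (hP p hp)
      have hPmN : ∀ y ∈ Pm, N y ∈ Pm := fun y hy =>
        Submodule.mem_sup_right (hPmNP y hy)
      have hQmPm : ∀ x ∈ Qm, (N ^ m) x ∈ Pm :=
        fun x hx => Submodule.mem_sup_right ((hQmmem x).mp hx).2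
      obtain ⟨W', hW', uniqW'⟩ := ih Pm Qm hPmQm hQmN hPmN hQmPm
      have hW'top : ∀ j : ℤ, (m : ℤ) - 1 ≤ j → W' j = Qm := hW'.high m hPmN hQmPm
      have hW'bot : ∀ j : ℤ, j ≤ -(m : ℤ) → W' j = Pm := hW'.low m hPmN hQmPm
      have hW'leQ : ∀ j, W' j ≤ Q := fun j => (hW'.le_right j).trans inf_le_left
      have hPleW' : ∀ j, P ≤ W' j := fun j =>
        le_trans le_sup_right (hW'.le_left j)
      set Wc : ℤ → Submodule R M :=
        fun j => if (m : ℤ) ≤ j then Q else if j ≤ -(m : ℤ) - 1 then P else W' j with hWcdef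
      have hWcQ : ∀ j : ℤ, (m : ℤ) ≤ j → Wc j = Q := by
        intro j hj; rw [hWcdef]; dsimp only; rw [if_pos hj]
      have hWcP : ∀ j : ℤ, j ≤ -(m : ℤ) - 1 → Wc j = P := by
        intro j hj; rw [hWcdef]; dsimp only; rw [if_neg (by omega), if_pos hj]
      have hWcmid : ∀ j : ℤ, -(m : ℤ) ≤ j → j ≤ (m : ℤ) - 1 → Wc j = W' j := by
        intro j h1 h2; rw [hWcdef]; dsimp only; rw [if_neg (by omega), if_neg (by omega)]
      have hPWc : ∀ j, P ≤ Wc j := by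
        intro j
        rw [hWcdef]; dsimp only
        split_ifs
        · exact hPQ
        · exact le_rfl
        · exact hPleW' j
      have hWcMF : MF N P Q Wc := by
        refine ⟨?_, ⟨-(m : ℤ) - 1, fun j hj => hWcP j hj⟩, ⟨(m : ℤ), fun j hj => hWcQ j hj⟩,
          ?_, ?_, ?_⟩
        · -- monotone
          intro i j hij
          by_cases hi1 : (m : ℤ) ≤ i
          · rw [hWcQ i hi1, hWcQ j (le_trans hi1 hij)]
          · by_cases hi2 : i ≤ -(m : ℤ) - 1
            · rw [hWcP i hi2]; exact hPWc j
            · rw [hWcmid i (by omega) (by omega)]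
              by_cases hj1 : (m : ℤ) ≤ j
              · rw [hWcQ j hj1]; exact hW'leQ i
              · rw [hWcmid j (by omega) (by omega)]
                exact hW'.1 hij
        · -- N axiom
          intro j x hx
          by_cases hA : (m : ℤ) + 2 ≤ j
          · rw [hWcQ j (by omega)] at hx
            rw [hWcQ (j - 2) (by omega)]
            exact hQ x hx
          · by_cases hB : j = (m : ℤ) + 1
            · subst hB
              rw [hWcQ _ (by omega)] at hx
              rw [show (m : ℤ) + 1 - 2 = (m : ℤ) - 1 by ring,
                hWcmid _ (by omega) (by omega), hW'top _ le_rfl]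
              exact (hQmmem _).mpr ⟨hQ x hx, by rw [hcomm]; exact hd x hx⟩
            · by_cases hC : j = (m : ℤ)
              · subst hC
                rw [hWcQ _ le_rfl] at hx
                rw [hWcmid _ (by omega) (by omega)]
                have hNxQm : N x ∈ Qm :=
                  (hQmmem _).mpr ⟨hQ x hx, by rw [hcomm]; exact hd x hx⟩
                have h1 : N x ∈ W' ((m - 1 : ℕ) : ℤ) := by
                  rw [show ((m - 1 : ℕ) : ℤ) = (m : ℤ) - 1 by omega, hW'top _ le_rfl]
                  exact hNxQm
                have h2 : (N ^ (m - 1)) (N x) ∈ W' (-((m - 1 : ℕ) : ℤ) - 1) := by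
                  rw [hcomm2]
                  exact hW'.le_left _ (Submodule.mem_sup_left (Submodule.mem_map_of_mem hx))
                have := hW'.2.2.2.2.1 (m - 1) (N x) h1 h2
                rw [show (m : ℤ) - 2 = ((m - 1 : ℕ) : ℤ) - 1 by omega]
                exact this
              · by_cases hD : -(m : ℤ) + 2 ≤ j
                · rw [hWcmid j (by omega) (by omega)] at hx
                  rw [hWcmid (j - 2) (by omega) (by omega)]
                  exact hW'.2.2.2.1 j x hx
                · by_cases hE : j = -(m : ℤ) + 1
                  · subst hE
                    rw [hWcmid _ (by omega) (by omega)] at hx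
                    rw [show -(m : ℤ) + 1 - 2 = -(m : ℤ) - 1 by ring, hWcP _ le_rfl]
                    obtain ⟨x', hx'Q, hsub⟩ := hW'.2.2.2.2.2 (m - 1) x
                      (by rw [show -((m - 1 : ℕ) : ℤ) = -(m : ℤ) + 1 by omega]; exact hx)
                    have hx'Qm : x' ∈ Qm := by
                      rw [show ((m - 1 : ℕ) : ℤ) = (m : ℤ) - 1 by omega, hW'top _ le_rfl] at hx'Q
                      exact hx'Q
                    have hsub' : x - (N ^ (m - 1)) x' ∈ Pm := by
                      rw [show -((m - 1 : ℕ) : ℤ) - 1 = -(m : ℤ) by omega,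
                        hW'bot _ le_rfl] at hsub
                      exact hsub
                    have hkey : N x = (N ^ m) x' + N (x - (N ^ (m - 1)) x') := by
                      rw [map_sub, hcomm2']
                      abel
                    rw [hkey]
                    exact add_mem ((hQmmem x').mp hx'Qm).2 (hPmNP _ hsub')
                  · by_cases hF : j = -(m : ℤ)
                    · subst hF
                      rw [hWcmid _ le_rfl (by omega), hW'bot _ le_rfl] at hx
                      rw [hWcP _ (by omega)]
                      exact hPmNP x hx
                    · rw [hWcP j (by omega)] at hx
                      rw [hWcP (j - 2) (by omega)]
                      exact hP x hx
        · -- injectivity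
          intro k x hx hk
          by_cases h1 : m + 1 ≤ k
          · rw [hWcQ ((k : ℤ) - 1) (by omega)]
            rw [hWcQ (k : ℤ) (by omega)] at hx
            exact hx
          · by_cases h2 : k = m
            · subst h2
              rw [hWcQ _ le_rfl] at hx
              rw [hWcP (-(k : ℤ) - 1) le_rfl] at hk
              rw [hWcmid ((k : ℤ) - 1) (by omega) (by omega), hW'top _ le_rfl]
              exact (hQmmem _).mpr ⟨hx, hk⟩
            · rw [hWcmid (k : ℤ) (by omega) (by omega)] at hx
              rw [hWcmid (-(k : ℤ) - 1) (by omega) (by omega)] at hk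
              rw [hWcmid ((k : ℤ) - 1) (by omega) (by omega)]
              exact hW'.2.2.2.2.1 k x hx hk
        · -- surjectivity
          intro k y hy
          by_cases h1 : m + 1 ≤ k
          · refine ⟨0, zero_mem _, ?_⟩
            rw [map_zero, sub_zero]
            rw [hWcP (-(k : ℤ)) (by omega)] at hy
            rw [hWcP _ (by omega)]
            exact hy
          · by_cases h2 : k = m
            · subst h2
              rw [hWcmid (-(k : ℤ)) (by omega) (by omega), hW'bot _ le_rfl] at hy
              rw [hPmdef] at hy
              obtain ⟨u, hu, p, hp, hup⟩ := Submodule.mem_sup.mp hy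
              obtain ⟨q, hq, rfl⟩ := Submodule.mem_map.mp hu
              refine ⟨q, by rw [hWcQ _ le_rfl]; exact hq, ?_⟩
              rw [hWcP _ le_rfl]
              have : y - (N ^ k) q = p := by rw [← hup]; abel
              rw [this]
              exact hp
            · rw [hWcmid (-(k : ℤ)) (by omega) (by omega)] at hy
              obtain ⟨x, hx, hsub⟩ := hW'.2.2.2.2.2 k y hy
              refine ⟨x, ?_, ?_⟩
              · rw [hWcmid (k : ℤ) (by omega) (by omega)]; exact hx
              · rw [hWcmid (-(k : ℤ) - 1) (by omega) (by omega)]; exact hsub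
      refine ⟨Wc, hWcMF, ?_⟩
      -- uniqueness
      intro W hW
      have hWtop : ∀ j : ℤ, (m : ℤ) ≤ j → W j = Q := by
        intro j hj
        exact hW.high (m + 1) hP hd j (by push_cast; omega)
      have hWbot : ∀ j : ℤ, j ≤ -(m : ℤ) - 1 → W j = P := by
        intro j hj
        exact hW.low (m + 1) hP hd j (by push_cast; omega)
      have hWm1 : W ((m : ℤ) - 1) = Qm := by
        apply le_antisymm
        · intro x hx
          refine (hQmmem x).mpr ⟨hW.le_right _ hx, ?_⟩
          have h2 := hW.npow m ((m : ℤ) - 1) x hx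
          rw [hWbot _ (by omega)] at h2
          exact h2
        · intro x hx
          obtain ⟨hxQ, hxP⟩ := (hQmmem x).mp hx
          refine hW.2.2.2.2.1 m x ?_ ?_
          · rw [hWtop _ le_rfl]; exact hxQ
          · exact hW.le_left _ hxP
      have hWm2 : W (-(m : ℤ)) = Pm := by
        apply le_antisymm
        · intro y hy
          obtain ⟨x, hx, hsub⟩ := hW.2.2.2.2.2 m y hy
          rw [hWtop _ le_rfl] at hx
          rw [hWbot _ (by omega)] at hsub
          have h3 : (N ^ m) x + (y - (N ^ m) x) = y := by abel
          have h4 := add_mem (Submodule.mem_sup_left (Submodule.mem_map_of_mem hx) :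
            (N ^ m) x ∈ Pm) (Submodule.mem_sup_right hsub : y - (N ^ m) x ∈ Pm)
          rwa [h3] at h4
        · rw [hPmdef]
          refine sup_le ?_ ?_
          · intro u hu
            obtain ⟨q, hq, rfl⟩ := Submodule.mem_map.mp hu
            have h2 := hW.npow m (m : ℤ) q (by rw [hWtop _ le_rfl]; exact hq)
            rw [show (m : ℤ) - 2 * (m : ℤ) = -(m : ℤ) by ring] at h2
            exact h2
          · exact hW.le_left _
      have hWdMF : MF N Pm Qm (fun j => W (max (-(m : ℤ)) (min j ((m : ℤ) - 1)))) := by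
        refine ⟨?_, ⟨-(m : ℤ), ?_⟩, ⟨(m : ℤ) - 1, ?_⟩, ?_, ?_, ?_⟩
        · intro i j hij
          exact hW.1 (max_le_max le_rfl (min_le_min hij le_rfl))
        · intro j hj
          dsimp only
          rw [min_eq_left (by omega), max_eq_left (by omega)]
          exact hWm2
        · intro j hj
          dsimp only
          rw [min_eq_right hj, max_eq_right (by omega)]
          exact hWm1
        · intro j x hx
          dsimp only at hx ⊢
          have h2 := hW.2.2.2.1 _ _ hx
          exact hW.1 (show max (-(m : ℤ)) (min j ((m : ℤ) - 1)) - 2 ≤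
            max (-(m : ℤ)) (min (j - 2) ((m : ℤ) - 1)) by omega) h2
        · intro k x hx hk
          dsimp only at hx hk ⊢
          by_cases h1 : (k : ℤ) ≤ (m : ℤ) - 1
          · rw [min_eq_left h1, max_eq_right (by omega)] at hx
            rw [min_eq_left (by omega), max_eq_right (by omega)] at hk
            rw [min_eq_left (by omega), max_eq_right (by omega)]
            exact hW.2.2.2.2.1 k x hx hk
          · rw [min_eq_right (by omega), max_eq_right (by omega)] at hx
            rw [min_eq_right (by omega), max_eq_right (by omega)]
            exact hx
        · intro k y hy
          dsimp only at hy ⊢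
          by_cases h1 : (k : ℤ) ≤ (m : ℤ) - 1
          · rw [min_eq_left (by omega), max_eq_right (by omega)] at hy
            obtain ⟨x, hx, hsub⟩ := hW.2.2.2.2.2 k y hy
            refine ⟨x, ?_, ?_⟩
            · rw [min_eq_left (by omega), max_eq_right (by omega)]; exact hx
            · rw [min_eq_left (by omega), max_eq_right (by omega)]; exact hsub
          · rw [min_eq_left (by omega), max_eq_left (by omega)] at hy
            refine ⟨0, zero_mem _, ?_⟩
            rw [map_zero, sub_zero, min_eq_left (by omega), max_eq_left (by omega)]
            exact hy
      have hWdW' : (fun j => W (max (-(m : ℤ)) (min j ((m : ℤ) - 1)))) = W' :=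
        uniqW' _ hWdMF
      funext j
      by_cases hj1 : (m : ℤ) ≤ j
      · rw [hWtop j hj1, hWcQ j hj1]
      · by_cases hj2 : j ≤ -(m : ℤ) - 1
        · rw [hWbot j hj2, hWcP j hj2]
        · rw [hWcmid j (by omega) (by omega), ← hWdW']
          dsimp only
          rw [min_eq_left (by omega), max_eq_right (by omega)]

end MonodromyAux

/-- For every nilpotent endomorphism `N` of an `R`-module `M` there exists a
unique increasing filtration `(W_j)` with `W_j = 0` for `j ≪ 0`, `W_j = M` for
`j ≫ 0`, `N (W_j) ⊆ W_{j-2}`, and such that `N ^ k` induces an isomorphism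
`W_k / W_{k-1} ≅ W_{-k} / W_{-k-1}` for all `k ≥ 0` (the monodromy filtration). -/
theorem existsUnique_monodromyFiltration {R M : Type*} [Ring R] [AddCommGroup M]
    [Module R M] (N : Module.End R M) (hN : IsNilpotent N) :
    ∃! W : ℤ → Submodule R M, IsMonodromyFiltration N W := by
  obtain ⟨d, hNd⟩ := hN
  have h := MonodromyAux.key N d ⊥ ⊤ bot_le (fun x _ => Submodule.mem_top)
    (fun x hx => by rw [Submodule.mem_bot] at hx ⊢; rw [hx, map_zero])
    (fun x _ => by rw [hNd]; simp)
  exact h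
end
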